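/- arXiv:2008.00685 — 7 statements merged into one kernel-verified Lean document; each statement's English description precedes it below -/
import Mathlib

section
/- Let τ>0 and σ>1, and consider the sequence M_p = p^{τ p^σ} for p ∈ ℕ. Then there exists a constant C>1 such that for all integers p,q ≥ 1 one has (p+q)^{τ(p+q)^σ} ≤ C^{p^σ + q^σ + 1} · p^{2^{σ-1} τ p^σ} · q^{2^{σ-1} τ q^σ} (condition (M.2)~). -/
open Real

/-- Convexity: `(x+y)^σ ≤ 2^(σ-1) (x^σ + y^σ)` for reals `x,y ≥ 0`, `σ ≥ 1`. -/
lemma aux_convex (x y σ : ℝ) (hx : 0 ≤ x) (hy : 0 ≤ y) (hσ : 1 ≤ σ) :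
    (x + y) ^ σ ≤ (2:ℝ) ^ (σ - 1) * (x ^ σ + y ^ σ) := by
  have := NNReal.rpow_add_le_mul_rpow_add_rpow ⟨x, hx⟩ ⟨y, hy⟩ hσ
  have h := (NNReal.coe_le_coe).2 this
  push_cast [NNReal.coe_rpow] at h
  exact h

/-- Swap the base of a power at the cost of an exponential factor. -/
lemma aux_pow_swap (P Q E B : ℝ) (hP : 0 < P) (hPQ : P ≤ Q) (hE : 0 ≤ E)
    (hB : E * (Q / P) ≤ B) : Q ^ E ≤ P ^ E * Real.exp B := by
  have hQpos : 0 < Q := lt_of_lt_of_le hP hPQ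
  have hquot : (1:ℝ) ≤ Q / P := (one_le_div hP).2 hPQ
  have h1 : Q = P * (Q / P) := by field_simp
  have h2 : Q ^ E = P ^ E * (Q / P) ^ E := by
    rw [h1, Real.mul_rpow hP.le (by positivity)]
    congr 1
    field_simp
  rw [h2]
  apply mul_le_mul_of_nonneg_left _ (Real.rpow_nonneg hP.le _)
  rw [Real.rpow_def_of_pos (by positivity)]
  apply Real.exp_le_exp.2
  have hlog : Real.log (Q / P) ≤ Q / P := by
    have := Real.log_le_sub_one_of_pos (show (0:ℝ) < Q / P by positivity)
    linarith
  calc Real.log (Q / P) * E ≤ (Q / P) * E :=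
        mul_le_mul_of_nonneg_right hlog hE
    _ = E * (Q / P) := by ring
    _ ≤ B := hB

/-- The core asymmetric case `1 ≤ P ≤ Q`. -/
lemma aux_key (τ σ : ℝ) (hτ : 0 < τ) (hσ : 1 < σ) (P Q : ℝ) (hP : 1 ≤ P) (hPQ : P ≤ Q) :
    (P + Q) ^ (τ * (P + Q) ^ σ) ≤
      ((2 * Real.exp 1) ^ (τ * (2:ℝ) ^ (σ - 1))) ^ (P ^ σ + Q ^ σ + 1) *
        P ^ ((2:ℝ) ^ (σ - 1) * τ * P ^ σ) * Q ^ ((2:ℝ) ^ (σ - 1) * τ * Q ^ σ) := by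
  have hQ : 1 ≤ Q := hP.trans hPQ
  have hPpos : 0 < P := lt_of_lt_of_le one_pos hP
  have hQpos : 0 < Q := lt_of_lt_of_le one_pos hQ
  set a : ℝ := (2:ℝ) ^ (σ - 1) with ha
  have hapos : 0 < a := Real.rpow_pos_of_pos two_pos _
  have hPσ : 0 < P ^ σ := Real.rpow_pos_of_pos hPpos σ
  have hQσ : 0 < Q ^ σ := Real.rpow_pos_of_pos hQpos σ
  have hbase : 1 ≤ P + Q := by linarith
  -- Step 1: exponent bound via convexity
  have h1 : (P + Q) ^ (τ * (P + Q) ^ σ) ≤ (P + Q) ^ (τ * (a * (P ^ σ + Q ^ σ))) := by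
    apply Real.rpow_le_rpow_of_exponent_le hbase
    have := aux_convex P Q σ (le_of_lt hPpos) (le_of_lt hQpos) hσ.le
    nlinarith
  -- Step 2: split
  have h2 : (P + Q) ^ (τ * (a * (P ^ σ + Q ^ σ))) =
      (P + Q) ^ (a * τ * P ^ σ) * (P + Q) ^ (a * τ * Q ^ σ) := by
    rw [← Real.rpow_add (by linarith)]
    ring_nf
  -- Step 3: P + Q ≤ 2Q
  have h3 : ∀ E : ℝ, 0 ≤ E → (P + Q) ^ E ≤ (2:ℝ) ^ E * Q ^ E := by
    intro E hE
    rw [← Real.mul_rpow two_pos.le hQpos.le]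
    exact Real.rpow_le_rpow (by linarith) (by linarith) hE
  have hE1 : 0 ≤ a * τ * P ^ σ := by positivity
  have hE2 : 0 ≤ a * τ * Q ^ σ := by positivity
  -- Step 4: swap base Q to base P
  have h4 : Q ^ (a * τ * P ^ σ) ≤ P ^ (a * τ * P ^ σ) * Real.exp (a * τ * Q ^ σ) := by
    apply aux_pow_swap P Q _ _ hPpos hPQ hE1
    have hPQσ : P ^ σ * (Q / P) ≤ Q ^ σ := by
      have hPσ1 : P ^ σ = P ^ (σ - 1) * P := by
        rw [← Real.rpow_add_one (ne_of_gt hPpos)]; ring_nf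
      have hQσ1 : Q ^ σ = Q ^ (σ - 1) * Q := by
        rw [← Real.rpow_add_one (ne_of_gt hQpos)]; ring_nf
      have h5 : P ^ (σ - 1) ≤ Q ^ (σ - 1) :=
        Real.rpow_le_rpow hPpos.le hPQ (by linarith)
      have heq : P ^ (σ - 1) * P * (Q / P) = P ^ (σ - 1) * Q := by
        field_simp
      rw [hPσ1, hQσ1, heq]
      exact mul_le_mul_of_nonneg_right h5 hQpos.le
    nlinarith [mul_le_mul_of_nonneg_left hPQσ (by positivity : (0:ℝ) ≤ a * τ)]
  -- Combine
  have main : (P + Q) ^ (τ * (P + Q) ^ σ) ≤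
      ((2:ℝ) ^ (a * τ * P ^ σ) * (2:ℝ) ^ (a * τ * Q ^ σ) * Real.exp (a * τ * Q ^ σ)) *
        P ^ (a * τ * P ^ σ) * Q ^ (a * τ * Q ^ σ) := by
    calc (P + Q) ^ (τ * (P + Q) ^ σ) ≤ (P + Q) ^ (τ * (a * (P ^ σ + Q ^ σ))) := h1
      _ = (P + Q) ^ (a * τ * P ^ σ) * (P + Q) ^ (a * τ * Q ^ σ) := h2
      _ ≤ ((2:ℝ) ^ (a * τ * P ^ σ) * Q ^ (a * τ * P ^ σ)) *
            ((2:ℝ) ^ (a * τ * Q ^ σ) * Q ^ (a * τ * Q ^ σ)) := by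
          apply mul_le_mul (h3 _ hE1) (h3 _ hE2) (Real.rpow_nonneg (by linarith) _) (by positivity)
      _ ≤ ((2:ℝ) ^ (a * τ * P ^ σ) * (P ^ (a * τ * P ^ σ) * Real.exp (a * τ * Q ^ σ))) *
            ((2:ℝ) ^ (a * τ * Q ^ σ) * Q ^ (a * τ * Q ^ σ)) := by
          apply mul_le_mul_of_nonneg_right _ (by positivity)
          exact mul_le_mul_of_nonneg_left h4 (by positivity)
      _ = ((2:ℝ) ^ (a * τ * P ^ σ) * (2:ℝ) ^ (a * τ * Q ^ σ) * Real.exp (a * τ * Q ^ σ)) *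
            P ^ (a * τ * P ^ σ) * Q ^ (a * τ * Q ^ σ) := by ring
  -- bound the constant part
  have h2e : (1:ℝ) < 2 * Real.exp 1 := by
    have := Real.add_one_le_exp 1
    nlinarith [Real.exp_pos 1]
  have hS : 0 ≤ P ^ σ + Q ^ σ + 1 := by positivity
  have hconst : (2:ℝ) ^ (a * τ * P ^ σ) * (2:ℝ) ^ (a * τ * Q ^ σ) * Real.exp (a * τ * Q ^ σ) ≤
      ((2 * Real.exp 1) ^ (τ * a)) ^ (P ^ σ + Q ^ σ + 1) := by
    have hCpos : (0:ℝ) < 2 * Real.exp 1 := by linarith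
    rw [← Real.rpow_mul hCpos.le]
    rw [Real.mul_rpow two_pos.le (Real.exp_pos 1).le, Real.exp_one_rpow]
    have hA : (2:ℝ) ^ (a * τ * P ^ σ) * (2:ℝ) ^ (a * τ * Q ^ σ) =
        (2:ℝ) ^ (a * τ * P ^ σ + a * τ * Q ^ σ) := (Real.rpow_add two_pos _ _).symm
    rw [hA]
    apply mul_le_mul
    · apply Real.rpow_le_rpow_of_exponent_le one_le_two
      nlinarith
    · apply Real.exp_le_exp.2
      nlinarith
    · positivity
    · positivity
  calc (P + Q) ^ (τ * (P + Q) ^ σ) ≤ _ := main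
    _ ≤ ((2 * Real.exp 1) ^ (τ * a)) ^ (P ^ σ + Q ^ σ + 1) *
          P ^ (a * τ * P ^ σ) * Q ^ (a * τ * Q ^ σ) := by
        apply mul_le_mul_of_nonneg_right _ (Real.rpow_nonneg hQpos.le _)
        exact mul_le_mul_of_nonneg_right hconst (Real.rpow_nonneg hPpos.le _)

/-- Condition (M.2)~ for the sequence `M_p = p^{τ p^σ}`:
there is `C > 1` such that for all integers `p, q ≥ 1`,
`(p+q)^{τ(p+q)^σ} ≤ C^{p^σ + q^σ + 1} · p^{2^{σ-1} τ p^σ} · q^{2^{σ-1} τ q^σ}`. -/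
theorem stmt0 (τ σ : ℝ) (hτ : 0 < τ) (hσ : 1 < σ) :
    ∃ C : ℝ, 1 < C ∧ ∀ p q : ℕ, 1 ≤ p → 1 ≤ q →
      ((p : ℝ) + (q : ℝ)) ^ (τ * ((p : ℝ) + (q : ℝ)) ^ σ) ≤
        C ^ ((p : ℝ) ^ σ + (q : ℝ) ^ σ + 1) *
          (p : ℝ) ^ ((2 : ℝ) ^ (σ - 1) * τ * (p : ℝ) ^ σ) *
          (q : ℝ) ^ ((2 : ℝ) ^ (σ - 1) * τ * (q : ℝ) ^ σ) := by
  refine ⟨(2 * Real.exp 1) ^ (τ * (2:ℝ) ^ (σ - 1)), ?_, ?_⟩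
  · apply Real.one_lt_rpow_iff_of_pos (by positivity) |>.2
    left
    constructor
    · have := Real.add_one_le_exp 1
      nlinarith [Real.exp_pos 1]
    · positivity
  · intro p q hp hq
    have hp1 : (1:ℝ) ≤ (p:ℝ) := by exact_mod_cast hp
    have hq1 : (1:ℝ) ≤ (q:ℝ) := by exact_mod_cast hq
    rcases le_total (p:ℝ) (q:ℝ) with h | h
    · exact aux_key τ σ hτ hσ p q hp1 h
    · have := aux_key τ σ hτ hσ q p hq1 h
      calc ((p:ℝ) + q) ^ (τ * ((p:ℝ) + q) ^ σ) = ((q:ℝ) + p) ^ (τ * ((q:ℝ) + p) ^ σ) := by ring_nf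
        _ ≤ _ := this
        _ = _ := by ring
end

section
/- Let τ>0 and σ>1, and consider the sequence M_p = p^{τ p^σ} for p ∈ ℕ. Then there exists a constant C>1 such that for all integers p ≥ 1 one has (p+1)^{τ(p+1)^σ} ≤ C^{p^σ + 1} · p^{τ p^σ} (condition (M.2)'~). -/
open Real

set_option maxHeartbeats 1000000 in
/-- Condition (M.2)'~ for the sequence `M_p = p^{τ p^σ}`:
there is `C > 1` such that for all integers `p ≥ 1`,
`(p+1)^{τ(p+1)^σ} ≤ C^{p^σ + 1} · p^{τ p^σ}`. -/
theorem stmt1 (τ σ : ℝ) (hτ : 0 < τ) (hσ : 1 < σ) :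
    ∃ C : ℝ, 1 < C ∧ ∀ p : ℕ, 1 ≤ p →
      ((p : ℝ) + 1) ^ (τ * ((p : ℝ) + 1) ^ σ) ≤
        C ^ ((p : ℝ) ^ σ + 1) * (p : ℝ) ^ (τ * (p : ℝ) ^ σ) := by
  have hσ0 : (0:ℝ) < σ := by linarith
  set E : ℝ := Real.exp σ with hE
  have hE0 : 0 < E := Real.exp_pos σ
  set K : ℝ := τ * (2 * σ * E + 1) with hK
  have hK0 : 0 < K := by positivity
  refine ⟨Real.exp K, Real.one_lt_exp_iff.2 hK0, ?_⟩
  intro p hp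
  have hq : (1:ℝ) ≤ (p:ℝ) := by exact_mod_cast hp
  set q : ℝ := (p:ℝ) with hqdef
  have hq0 : 0 < q := by linarith
  have hq10 : 0 < q + 1 := by linarith
  -- rewrite everything as exp
  have e1 : (q + 1) ^ (τ * (q + 1) ^ σ) = Real.exp (Real.log (q + 1) * (τ * (q + 1) ^ σ)) :=
    Real.rpow_def_of_pos hq10 _
  have e2 : q ^ (τ * q ^ σ) = Real.exp (Real.log q * (τ * q ^ σ)) :=
    Real.rpow_def_of_pos hq0 _
  have e3 : Real.exp K ^ (q ^ σ + 1) = Real.exp (K * (q ^ σ + 1)) := (Real.exp_mul _ _).symm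
  rw [e1, e2, e3, ← Real.exp_add, Real.exp_le_exp]
  -- key quantities
  set x : ℝ := 1 / q with hx
  have hx0 : 0 < x := by positivity
  have hx1 : x ≤ 1 := by rw [hx]; exact div_le_one_of_le₀ hq (by linarith)
  set L : ℝ := Real.log q with hL
  have hL0 : 0 ≤ L := Real.log_nonneg hq
  have hLx : L * x ≤ 1 := by
    have hlq : L ≤ q := le_trans (Real.log_le_sub_one_of_pos hq0) (by linarith)
    calc L * x ≤ q * x := by nlinarith
    _ = 1 := by rw [hx, mul_one_div_cancel (ne_of_gt hq0)]
  -- bound on (q+1)^σ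
  have hmul : (q + 1) ^ σ = q ^ σ * (1 + x) ^ σ := by
    rw [← Real.mul_rpow (le_of_lt hq0) (by positivity)]
    congr 1
    rw [hx, mul_add, mul_one, mul_one_div_cancel (ne_of_gt hq0)]
  have hA : (1 + x) ^ σ ≤ Real.exp (σ * x) := by
    calc (1 + x) ^ σ ≤ (Real.exp x) ^ σ :=
          Real.rpow_le_rpow (by positivity) (by linarith [Real.add_one_le_exp x]) (le_of_lt hσ0)
      _ = Real.exp (σ * x) := by rw [← Real.exp_mul, mul_comm]
  have hB : Real.exp (σ * x) ≤ 1 + σ * x * E := by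
    have h1 : -(σ * x) + 1 ≤ Real.exp (-(σ * x)) := Real.add_one_le_exp _
    have h2 : Real.exp (σ * x) ≤ E := by
      rw [hE]
      exact Real.exp_le_exp.2 (by nlinarith)
    have h3 : Real.exp (-(σ * x)) * Real.exp (σ * x) = 1 := by
      rw [← Real.exp_add]; simp
    nlinarith [Real.exp_pos (σ * x), mul_pos hσ0 hx0]
  have hqσ1 : (1:ℝ) ≤ q ^ σ := Real.one_le_rpow hq (le_of_lt hσ0)
  have hqσ0 : (0:ℝ) ≤ q ^ σ := by linarith
  -- bound on log (q+1)
  have hlog : Real.log (q + 1) ≤ L + x := by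
    have h1 : Real.log ((q + 1) / q) ≤ x := by
      have := Real.log_le_sub_one_of_pos (x := (q + 1) / q) (by positivity)
      have : Real.log ((q + 1) / q) ≤ (q + 1) / q - 1 := this
      have heq : (q + 1) / q - 1 = x := by rw [hx, add_div, div_self (ne_of_gt hq0)]; ring
      linarith [heq ▸ this]
    have h2 : Real.log ((q + 1) / q) = Real.log (q + 1) - L := by
      rw [Real.log_div (by linarith) (ne_of_gt hq0)]
    linarith
  have hlogq1 : 0 ≤ Real.log (q + 1) := Real.log_nonneg (by linarith)
  -- the key inequality
  have key : (q + 1) ^ σ * Real.log (q + 1) ≤ q ^ σ * L + (2 * σ * E + 1) * q ^ σ := by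
    have hstep : (q + 1) ^ σ * Real.log (q + 1) ≤ (q ^ σ * (1 + σ * x * E)) * (L + x) := by
      apply mul_le_mul _ hlog hlogq1 (by positivity)
      rw [hmul]
      exact mul_le_mul_of_nonneg_left (le_trans hA hB) hqσ0
    have hexpand : (q ^ σ * (1 + σ * x * E)) * (L + x) ≤ q ^ σ * L + (2 * σ * E + 1) * q ^ σ := by
      have hx2 : x * x ≤ 1 := by nlinarith
      have hσE : (0:ℝ) ≤ σ * E := by positivity
      have h1 : σ * E * (L * x) ≤ σ * E * 1 := mul_le_mul_of_nonneg_left hLx hσE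
      have h2 : σ * E * (x * x) ≤ σ * E * 1 := mul_le_mul_of_nonneg_left hx2 hσE
      have hcore : (1 + σ * x * E) * (L + x) ≤ L + (2 * σ * E + 1) := by nlinarith
      calc (q ^ σ * (1 + σ * x * E)) * (L + x) = q ^ σ * ((1 + σ * x * E) * (L + x)) := by ring
        _ ≤ q ^ σ * (L + (2 * σ * E + 1)) := mul_le_mul_of_nonneg_left hcore hqσ0
        _ = q ^ σ * L + (2 * σ * E + 1) * q ^ σ := by ring
    linarith
  -- conclude
  have : Real.log (q + 1) * (τ * (q + 1) ^ σ) = τ * ((q + 1) ^ σ * Real.log (q + 1)) := by ring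
  rw [this]
  have hfin : τ * ((q + 1) ^ σ * Real.log (q + 1)) ≤
      τ * (q ^ σ * L + (2 * σ * E + 1) * q ^ σ) :=
    mul_le_mul_of_nonneg_left key (le_of_lt hτ)
  have : K * (q ^ σ + 1) + Real.log q * (τ * q ^ σ) = τ * (q ^ σ * L + (2 * σ * E + 1) * q ^ σ) + K := by
    rw [hK]; ring
  rw [this]
  linarith
end

section
/- Let τ>0, σ>1 and h>0. There exist constants B₁, B₂, b₁, b₂ > 0 and k₀ > e^e such that for all k ≥ k₀: B₁ · k^{b₁ (ln k / ln(ln k))^{1/(σ-1)}} ≤ exp(T_{τ,σ,h}(k)) ≤ B₂ · k^{b₂ (ln k / ln(ln k))^{1/(σ-1)}}. -/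
/-- The associated function `T_{τ,σ,h}(k) = sup_{p∈ℕ} ln(h^{p^σ} k^p / p^{τ p^σ})`.
For `p = 0` the term equals `ln 1 = 0` (with the conventions `0^0 = 1` for real
rpow and `h^0 = 1`), so the supremum is nonnegative. -/
noncomputable def AssocT (τ σ h k : ℝ) : ℝ :=
  ⨆ p : ℕ, Real.log (h ^ ((p : ℝ) ^ σ) * k ^ p / (p : ℝ) ^ (τ * (p : ℝ) ^ σ))

private lemma log_le_half {t : ℝ} (ht : 0 < t) : Real.log t ≤ t / 2 := by
  have hs : 0 < Real.sqrt t := Real.sqrt_pos.mpr ht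
  have h1 : Real.log (Real.sqrt t) ≤ Real.sqrt t - 1 := Real.log_le_sub_one_of_pos hs
  have h2 : Real.log (Real.sqrt t) = Real.log t / 2 := Real.log_sqrt ht.le
  nlinarith only [h1, h2, Real.sq_sqrt ht.le, sq_nonneg (Real.sqrt t - 2)]

private lemma log_le_two_sqrt {t : ℝ} (ht : 0 < t) : Real.log t ≤ 2 * Real.sqrt t := by
  have hs : 0 < Real.sqrt t := Real.sqrt_pos.mpr ht
  have h1 : Real.log (Real.sqrt t) ≤ Real.sqrt t - 1 := Real.log_le_sub_one_of_pos hs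
  have h2 : Real.log (Real.sqrt t) = Real.log t / 2 := Real.log_sqrt ht.le
  linarith only [h1, h2, hs.le]

private lemma assoc_term_eq (τ σ h k : ℝ) (hh : 0 < h) (hk : 0 < k) {p : ℕ} (hp : 1 ≤ p) :
    Real.log (h ^ ((p : ℝ) ^ σ) * k ^ p / (p : ℝ) ^ (τ * (p : ℝ) ^ σ)) =
      (p : ℝ) ^ σ * Real.log h + p * Real.log k - τ * (p : ℝ) ^ σ * Real.log p := by
  have hp' : (0:ℝ) < p := by exact_mod_cast hp
  rw [Real.log_div (by positivity) (by positivity), Real.log_mul (by positivity) (by positivity),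
    Real.log_rpow hh, Real.log_pow, Real.log_rpow hp']

set_option maxHeartbeats 1000000 in
/-- two-sided logarithmic-type asymptotic bounds for
`exp(T_{τ,σ,h}(k))` for large `k`. -/
theorem stmt2 (τ σ h : ℝ) (hτ : 0 < τ) (hσ : 1 < σ) (hh : 0 < h) :
    ∃ B₁ B₂ b₁ b₂ k₀ : ℝ, 0 < B₁ ∧ 0 < B₂ ∧ 0 < b₁ ∧ 0 < b₂ ∧
      Real.exp (Real.exp 1) < k₀ ∧
      ∀ k : ℝ, k₀ ≤ k →
        B₁ * k ^ (b₁ * (Real.log k / Real.log (Real.log k)) ^ (1 / (σ - 1))) ≤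
            Real.exp (AssocT τ σ h k) ∧
          Real.exp (AssocT τ σ h k) ≤
            B₂ * k ^ (b₂ * (Real.log k / Real.log (Real.log k)) ^ (1 / (σ - 1))) := by
  have hσ1 : (0:ℝ) < σ - 1 := by linarith only [hσ]
  have hσ1ne : σ - 1 ≠ 0 := hσ1.ne'
  set M : ℝ := max (Real.log h) 0 with hM
  set M' : ℝ := max (-Real.log h) 0 with hM'
  have hM0 : 0 ≤ M := le_max_right _ _
  have hM'0 : 0 ≤ M' := le_max_right _ _
  have hlogh_le : Real.log h ≤ M := le_max_left _ _
  have hlogh_ge : -M' ≤ Real.log h := by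
    have h1 : -Real.log h ≤ M' := le_max_left _ _
    linarith only [h1]
  set C : ℝ := max 1 ((4 * (σ - 1) / τ) ^ (1 / (σ - 1))) with hCdef
  have hC1 : (1:ℝ) ≤ C := le_max_left _ _
  have hC0 : (0:ℝ) < C := by linarith only [hC1]
  set K : ℝ := M' + τ / (σ - 1) with hKdef
  have hK0 : 0 < K := add_pos_of_nonneg_of_pos hM'0 (div_pos hτ hσ1)
  set ε : ℝ := min 1 ((2 * K)⁻¹ ^ (1 / (σ - 1))) with hεdef
  have hε0 : 0 < ε := lt_min one_pos (Real.rpow_pos_of_pos (by positivity) _)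
  have hε1 : ε ≤ 1 := min_le_left _ _
  set p₁ : ℝ := Real.exp (2 * M / τ) with hp₁def
  have hp₁1 : (1:ℝ) ≤ p₁ := Real.one_le_exp (by positivity)
  set y : ℝ := max p₁ (2 / ε) with hydef
  have hy1 : (1:ℝ) ≤ y := le_trans hp₁1 (le_max_left _ _)
  have hy0 : (0:ℝ) ≤ y := by linarith only [hy1]
  set b₂ : ℝ := C + C ^ σ * M with hb₂def
  have hCsig0 : (0:ℝ) < C ^ σ := Real.rpow_pos_of_pos hC0 σ
  have hb₂0 : 0 < b₂ := by
    have h1 : 0 ≤ C ^ σ * M := mul_nonneg hCsig0.le hM0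
    have h2 : 0 < C + C ^ σ * M := by linarith only [h1, hC0]
    rw [hb₂def]; exact h2
  set k₀ : ℝ := Real.exp (max (Real.exp 1 + 1) (4 * y ^ (2 * (σ - 1)))) with hk₀def
  have hCσ : 4 * (σ - 1) / τ ≤ C ^ (σ - 1) := by
    have h0 : (0:ℝ) < 4 * (σ-1) / τ := div_pos (by linarith only [hσ1]) hτ
    have h1 : (4 * (σ-1)/τ) ^ (1/(σ-1)) ≤ C := le_max_right _ _
    have h2 : ((4*(σ-1)/τ) ^ (1/(σ-1))) ^ (σ-1) ≤ C ^ (σ-1) :=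
      Real.rpow_le_rpow (Real.rpow_nonneg h0.le _) h1 hσ1.le
    rwa [← Real.rpow_mul h0.le, one_div, inv_mul_cancel₀ hσ1ne, Real.rpow_one] at h2
  have hεσ : ε ^ (σ - 1) ≤ (2 * K)⁻¹ := by
    have h1 : ε ≤ (2*K)⁻¹ ^ (1/(σ-1)) := min_le_right _ _
    have h2 : ε ^ (σ-1) ≤ ((2*K)⁻¹ ^ (1/(σ-1))) ^ (σ-1) :=
      Real.rpow_le_rpow hε0.le h1 hσ1.le
    rwa [← Real.rpow_mul (by positivity), one_div, inv_mul_cancel₀ hσ1ne, Real.rpow_one] at h2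
  refine ⟨1, 1, ε / 4, b₂, k₀, one_pos, one_pos, by linarith only [hε0], hb₂0, ?_, ?_⟩
  · rw [hk₀def]
    exact Real.exp_lt_exp.mpr (lt_of_lt_of_le (by linarith only []) (le_max_left _ _))
  intro k hk
  have hk₀pos : 0 < k₀ := by rw [hk₀def]; exact Real.exp_pos _
  have hkpos : 0 < k := lt_of_lt_of_le hk₀pos hk
  have hLk : max (Real.exp 1 + 1) (4 * y ^ (2 * (σ - 1))) ≤ Real.log k := by
    have h1 := Real.log_le_log hk₀pos hk
    rwa [hk₀def, Real.log_exp] at h1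
  set L := Real.log k with hLdef
  have hL1 : Real.exp 1 + 1 ≤ L := le_trans (le_max_left _ _) hLk
  have he2 : (2:ℝ) ≤ Real.exp 1 := by linarith only [Real.add_one_le_exp (1:ℝ)]
  have hLpos : 0 < L := by linarith only [hL1, he2]
  set LL := Real.log L with hLLdef
  have hLL1 : (1:ℝ) ≤ LL := by
    have h1 : Real.log (Real.exp 1) ≤ LL := by
      rw [hLLdef]; exact Real.log_le_log (Real.exp_pos _) (by linarith only [hL1])
    rwa [Real.log_exp] at h1
  have hLLpos : (0:ℝ) < LL := by linarith only [hLL1]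
  have hLLne : LL ≠ 0 := hLLpos.ne'
  have hL4y : 4 * y ^ (2 * (σ - 1)) ≤ L := le_trans (le_max_right _ _) hLk
  have hLLx : 0 < L / LL := div_pos hLpos hLLpos
  set x : ℝ := (L / LL) ^ (1 / (σ - 1)) with hxdef
  have hxpos : 0 < x := Real.rpow_pos_of_pos hLLx _
  have hxσ : x ^ (σ - 1) = L / LL := by
    rw [hxdef, ← Real.rpow_mul hLLx.le, one_div, inv_mul_cancel₀ hσ1ne, Real.rpow_one]
  -- y ≤ x
  have hsqrtL : 2 * y ^ (σ - 1) ≤ Real.sqrt L := by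
    have h1 : Real.sqrt (4 * y ^ (2*(σ-1))) ≤ Real.sqrt L := Real.sqrt_le_sqrt hL4y
    have h2 : Real.sqrt (4 * y ^ (2*(σ-1))) = 2 * y ^ (σ-1) := by
      have h3 : 4 * y ^ (2*(σ-1)) = (2 * y ^ (σ-1))^2 := by
        rw [show (2*(σ-1)) = (σ-1)*2 by ring, Real.rpow_mul hy0]
        rw [show ((2:ℝ):ℝ) = ((2:ℕ):ℝ) by norm_num, Real.rpow_natCast]
        ring
      rw [h3, Real.sqrt_sq (mul_nonneg (by norm_num) (Real.rpow_nonneg hy0 _))]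
    rw [h2] at h1
    exact h1
  have hxy : y ≤ x := by
    by_contra hcon
    push_neg at hcon
    have h1 : x ^ (σ-1) < y ^ (σ-1) := Real.rpow_lt_rpow hxpos.le hcon hσ1
    rw [hxσ] at h1
    have hsL : 0 < Real.sqrt L := Real.sqrt_pos.mpr hLpos
    have hLLle : LL ≤ 2 * Real.sqrt L := log_le_two_sqrt hLpos
    have h2 : Real.sqrt L / 2 ≤ L / LL := by
      rw [div_le_div_iff₀ (by norm_num) hLLpos]
      have h4 : Real.sqrt L * LL ≤ Real.sqrt L * (2 * Real.sqrt L) :=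
        mul_le_mul_of_nonneg_left hLLle hsL.le
      have h5 : Real.sqrt L * Real.sqrt L = L := Real.mul_self_sqrt hLpos.le
      linarith only [h4, h5.le, h5.ge]
    have h3 : y ^ (σ-1) ≤ Real.sqrt L / 2 := by linarith only [hsqrtL]
    linarith only [h1, h2, h3]
  have hx1 : (1:ℝ) ≤ x := le_trans hy1 hxy
  have hxp₁ : p₁ ≤ x := le_trans (le_max_left _ _) hxy
  have hx2ε : 2 / ε ≤ x := le_trans (le_max_right _ _) hxy
  have hεx2 : 2 ≤ ε * x := by
    have h1 := (div_le_iff₀ hε0).mp hx2ε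
    linarith only [h1]
  -- log x bounds
  have hlogx : Real.log x = (LL - Real.log LL) / (σ - 1) := by
    rw [hxdef, Real.log_rpow hLLx, Real.log_div hLpos.ne' hLLpos.ne', ← hLLdef]
    ring
  have hlogx_ub : Real.log x ≤ LL / (σ - 1) := by
    rw [hlogx, sub_div]
    have h1 : 0 ≤ Real.log LL / (σ-1) := div_nonneg (Real.log_nonneg hLL1) hσ1.le
    linarith only [h1]
  have hlogx_lb : LL / (2 * (σ - 1)) ≤ Real.log x := by
    rw [hlogx, div_le_div_iff₀ (by linarith only [hσ1]) hσ1]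
    have h1 : Real.log LL ≤ LL / 2 := log_le_half hLLpos
    have h2 : 0 ≤ (LL - 2 * Real.log LL) * (σ - 1) :=
      mul_nonneg (by linarith only [h1]) hσ1.le
    linarith only [h2]
  -- upper bound for each term
  have hub : ∀ p : ℕ,
      Real.log (h ^ ((p : ℝ) ^ σ) * k ^ p / (p : ℝ) ^ (τ * (p : ℝ) ^ σ)) ≤ b₂ * x * L := by
    intro p
    have hbxL : 0 ≤ b₂ * x * L := mul_nonneg (mul_nonneg hb₂0.le hxpos.le) hLpos.le
    rcases Nat.eq_zero_or_pos p with rfl | hp1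
    · simp only [Nat.cast_zero,
        Real.zero_rpow (show σ ≠ 0 by intro hc; rw [hc] at hσ; linarith only [hσ]),
        mul_zero, Real.rpow_zero, pow_zero, mul_one, one_mul, div_one, Real.log_one]
      exact hbxL
    · have hp1' : (1:ℝ) ≤ p := by exact_mod_cast hp1
      have hp0 : (0:ℝ) < p := by linarith only [hp1']
      rw [assoc_term_eq τ σ h k hh hkpos hp1]
      have hlogp0 : 0 ≤ Real.log p := Real.log_nonneg hp1'
      have hpσ0 : (0:ℝ) < (p:ℝ) ^ σ := Real.rpow_pos_of_pos hp0 σ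
      by_cases hcase : (p:ℝ) ≤ C * x
      · have hxσle : x ^ σ ≤ x * L := by
          have h1 : x ^ σ = x * (L / LL) := by
            rw [show σ = 1 + (σ-1) by ring, Real.rpow_add hxpos, Real.rpow_one, hxσ]
          rw [h1]
          exact mul_le_mul_of_nonneg_left (div_le_self hLpos.le hLL1) hxpos.le
        have hpσle : (p:ℝ) ^ σ ≤ C ^ σ * x ^ σ := by
          calc (p:ℝ) ^ σ ≤ (C * x) ^ σ :=
                Real.rpow_le_rpow hp0.le hcase (by linarith only [hσ])
            _ = C ^ σ * x ^ σ := Real.mul_rpow hC0.le hxpos.le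
        have h2a : (p:ℝ)^σ * Real.log h ≤ (p:ℝ)^σ * M :=
          mul_le_mul_of_nonneg_left hlogh_le hpσ0.le
        have h2b : (p:ℝ)^σ * M ≤ (C^σ * x^σ) * M := mul_le_mul_of_nonneg_right hpσle hM0
        have h2c : (C^σ * M) * x^σ ≤ (C^σ * M) * (x*L) :=
          mul_le_mul_of_nonneg_left hxσle (mul_nonneg hCsig0.le hM0)
        have h1' : (p:ℝ) * L ≤ (C*x) * L := mul_le_mul_of_nonneg_right hcase hLpos.le
        have h3 : 0 ≤ τ * (p:ℝ)^σ * Real.log p :=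
          mul_nonneg (mul_nonneg hτ.le hpσ0.le) hlogp0
        have hsum : (p:ℝ)^σ * Real.log h + (p:ℝ) * L - τ * (p:ℝ)^σ * Real.log p
            ≤ C^σ * M * (x*L) + C * (x*L) := by
          linarith only [h2a, h2b, h2c, h1', h3]
        have heq : C^σ * M * (x*L) + C * (x*L) = b₂ * x * L := by rw [hb₂def]; ring
        linarith only [hsum, heq.le]
      · push_neg at hcase
        have hxCx : x ≤ C * x := le_mul_of_one_le_left hxpos.le hC1
        have hplog : 2 * M / τ ≤ Real.log p := by
          have h1 : p₁ ≤ (p:ℝ) := by linarith only [hxp₁, hxCx, hcase]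
          rw [hp₁def] at h1
          have h2 := Real.log_le_log (Real.exp_pos _) h1
          rwa [Real.log_exp] at h2
        have hA : (p:ℝ)^σ * Real.log h ≤ τ/2 * ((p:ℝ)^σ * Real.log p) := by
          have h1 : Real.log h ≤ τ/2 * Real.log p := by
            rw [div_le_iff₀ hτ] at hplog
            linarith only [hplog, hlogh_le]
          have h2 := mul_le_mul_of_nonneg_left h1 hpσ0.le
          linarith only [h2]
        have hpσ_split : (p:ℝ)^σ = (p:ℝ) * (p:ℝ)^(σ-1) := by
          have hsp := Real.rpow_add hp0 1 (σ-1)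
          rw [Real.rpow_one, show (1:ℝ)+(σ-1) = σ by ring] at hsp
          exact hsp
        have he1 : C^(σ-1) * (L/LL) ≤ (p:ℝ)^(σ-1) := by
          have h1 : (C*x)^(σ-1) ≤ (p:ℝ)^(σ-1) :=
            Real.rpow_le_rpow (mul_nonneg hC0.le hxpos.le) hcase.le hσ1.le
          rwa [Real.mul_rpow hC0.le hxpos.le, hxσ] at h1
        have he2' : LL / (2*(σ-1)) ≤ Real.log p := by
          have h1 : x ≤ (p:ℝ) := by linarith only [hxCx, hcase]
          have h2 := Real.log_le_log hxpos h1
          linarith only [hlogx_lb, h2]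
        have key : L ≤ τ/2 * ((p:ℝ)^(σ-1) * Real.log p) := by
          have hu0 : (0:ℝ) ≤ C^(σ-1) * (L/LL) :=
            mul_nonneg (Real.rpow_nonneg hC0.le _) hLLx.le
          have hv0 : (0:ℝ) ≤ LL/(2*(σ-1)) :=
            div_nonneg hLLpos.le (by linarith only [hσ1])
          have h4 : C^(σ-1) * (L/LL) * (LL/(2*(σ-1))) ≤ (p:ℝ)^(σ-1) * Real.log p :=
            mul_le_mul he1 he2' hv0 (le_trans hu0 he1)
          have h5 : C^(σ-1) * (L/LL) * (LL/(2*(σ-1))) = C^(σ-1) * L / (2*(σ-1)) := by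
            field_simp
          rw [h5] at h4
          have h7 : 4*(σ-1) ≤ τ * C^(σ-1) := by
            rw [div_le_iff₀ hτ] at hCσ
            linarith only [hCσ]
          have h8 : L ≤ τ/2 * (C^(σ-1)*L/(2*(σ-1))) := by
            have e : τ/2 * (C^(σ-1)*L/(2*(σ-1))) = τ * C^(σ-1) * L / (4*(σ-1)) := by
              field_simp
              ring
            rw [e, le_div_iff₀ (by linarith only [hσ1] : (0:ℝ) < 4*(σ-1))]
            linarith only [mul_le_mul_of_nonneg_right h7 hLpos.le]
          exact le_trans h8
            (mul_le_mul_of_nonneg_left h4 (by linarith only [hτ] : (0:ℝ) ≤ τ/2))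
        have hB : (p:ℝ) * L ≤ τ/2 * ((p:ℝ)^σ * Real.log p) := by
          rw [hpσ_split]
          have h6 := mul_le_mul_of_nonneg_left key hp0.le
          linarith only [h6]
        linarith only [hA, hB, hbxL]
  have hBdd : BddAbove (Set.range fun p : ℕ =>
      Real.log (h ^ ((p : ℝ) ^ σ) * k ^ p / (p : ℝ) ^ (τ * (p : ℝ) ^ σ))) :=
    ⟨b₂ * x * L, by rintro _ ⟨p, rfl⟩; exact hub p⟩
  have hT_ub : AssocT τ σ h k ≤ b₂ * x * L := ciSup_le hub
  -- lower bound
  set q : ℕ := ⌊ε * x⌋₊ with hqdef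
  have hεx0 : (0:ℝ) ≤ ε * x := mul_nonneg hε0.le hxpos.le
  have hqub : (q:ℝ) ≤ ε * x := Nat.floor_le hεx0
  have hqlb : ε * x / 2 ≤ (q:ℝ) := by
    have h1 : ε*x - 1 < (q:ℝ) := Nat.sub_one_lt_floor _
    linarith only [h1, hεx2]
  have hq1' : (1:ℝ) ≤ (q:ℝ) := by linarith only [hqlb, hεx2]
  have hq1 : 1 ≤ q := by exact_mod_cast hq1'
  have hq0 : (0:ℝ) < q := by linarith only [hq1']
  have hlogq0 : 0 ≤ Real.log q := Real.log_nonneg hq1'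
  have hlogq_ub : Real.log q ≤ LL/(σ-1) := by
    have h1 : (q:ℝ) ≤ x := le_trans hqub (mul_le_of_le_one_left hxpos.le hε1)
    have h2 := Real.log_le_log hq0 h1
    linarith only [hlogx_ub, h2]
  have hqσ1le : (q:ℝ)^(σ-1) ≤ ε^(σ-1) * (L/LL) := by
    have h1 : (q:ℝ)^(σ-1) ≤ (ε*x)^(σ-1) := Real.rpow_le_rpow hq0.le hqub hσ1.le
    rwa [Real.mul_rpow hε0.le hxpos.le, hxσ] at h1
  have hkey : (q:ℝ)^(σ-1) * (M' + τ * Real.log q) ≤ L/2 := by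
    have h1 : M' + τ * Real.log q ≤ LL * K := by
      have h2 : τ * Real.log q ≤ LL * (τ/(σ-1)) := by
        calc τ * Real.log q ≤ τ * (LL/(σ-1)) :=
              mul_le_mul_of_nonneg_left hlogq_ub hτ.le
          _ = LL * (τ/(σ-1)) := by ring
      have h3 : M' ≤ LL * M' := le_mul_of_one_le_left hM'0 hLL1
      calc M' + τ * Real.log q ≤ LL * M' + LL * (τ/(σ-1)) := add_le_add h3 h2
        _ = LL * K := by rw [hKdef]; ring
    have h2 : (0:ℝ) ≤ M' + τ * Real.log q :=
      add_nonneg hM'0 (mul_nonneg hτ.le hlogq0)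
    have h3 : (q:ℝ)^(σ-1) * (M' + τ*Real.log q) ≤ (ε^(σ-1)*(L/LL)) * (LL*K) :=
      mul_le_mul hqσ1le h1 h2
        (mul_nonneg (Real.rpow_nonneg hε0.le _) hLLx.le)
    have h4 : (ε^(σ-1)*(L/LL)) * (LL*K) = ε^(σ-1)*K*L := by
      field_simp
    have h6 : ε^(σ-1) * K ≤ 1/2 := by
      have h7 := mul_le_mul_of_nonneg_right hεσ hK0.le
      have h8 : (2*K)⁻¹ * K = 1/2 := by
        field_simp
      linarith only [h7, h8.le]
    have h5 : ε^(σ-1)*K*L ≤ L/2 := by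
      have h9 := mul_le_mul_of_nonneg_right h6 hLpos.le
      linarith only [h9]
    rw [h4] at h3
    exact le_trans h3 h5
  have hterm_lb : (ε/4) * x * L ≤
      Real.log (h ^ ((q:ℝ)^σ) * k ^ q / (q:ℝ)^(τ * (q:ℝ)^σ)) := by
    rw [assoc_term_eq τ σ h k hh hkpos hq1]
    have hqσ_split : (q:ℝ)^σ = (q:ℝ) * (q:ℝ)^(σ-1) := by
      have hsp := Real.rpow_add hq0 1 (σ-1)
      rw [Real.rpow_one, show (1:ℝ)+(σ-1) = σ by ring] at hsp
      exact hsp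
    have hqσ0 : (0:ℝ) < (q:ℝ)^σ := Real.rpow_pos_of_pos hq0 σ
    have h1 : (q:ℝ)^σ * (M' + τ * Real.log q) ≤ (q:ℝ) * (L/2) := by
      rw [hqσ_split, mul_assoc]
      exact mul_le_mul_of_nonneg_left hkey hq0.le
    have h2 : (q:ℝ)^σ * (-M') ≤ (q:ℝ)^σ * Real.log h :=
      mul_le_mul_of_nonneg_left hlogh_ge hqσ0.le
    have h3 : (ε*x/2) * L ≤ (q:ℝ) * L := mul_le_mul_of_nonneg_right hqlb hLpos.le
    linarith only [h1, h2, h3]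
  have hT_lb : (ε/4) * x * L ≤ AssocT τ σ h k :=
    le_trans hterm_lb (le_ciSup hBdd q)
  constructor
  · have e1 : (1:ℝ) * k ^ (ε/4 * x) = Real.exp ((ε/4) * x * L) := by
      rw [one_mul, Real.rpow_def_of_pos hkpos, ← hLdef]
      congr 1
      ring
    rw [e1]
    exact Real.exp_le_exp.mpr hT_lb
  · have e2 : (1:ℝ) * k ^ (b₂ * x) = Real.exp (b₂ * x * L) := by
      rw [one_mul, Real.rpow_def_of_pos hkpos, ← hLdef]
      congr 1
      ring
    rw [e2]
    exact Real.exp_le_exp.mpr hT_ub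
end

section
/- Let τ>0, σ>1 and h>0, and set c₁ = ((σ-1)/(τσ))^{1/(σ-1)} and c₂ = h^{-(σ-1)/τ} · e^{(σ-1)/σ} · (σ-1)/(τσ). Then there exist constants A₁, A₂ > 0 and k₀ > e (large enough that c₂ ln k > e for k ≥ k₀) such that for all k ≥ k₀: A₁ · k^{(1/2)·((σ-1)/σ)·c₁·(ln k / ln(c₂ ln k))^{1/(σ-1)}} ≤ exp(T_{τ,σ,h}(k)) ≤ A₂ · k^{c₁ (ln k / ln(c₂ ln k))^{1/(σ-1)}}. -/
open Real Filter

/-- Young-type estimate: `t - κ t^σ ≤ (σκ)^{-1/(σ-1)} (σ-1)/σ`. -/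
lemma young_aux_stmt3 {σ κ t : ℝ} (hσ : 1 < σ) (hκ : 0 < κ) (ht : 0 ≤ t) :
    t - κ * t ^ σ ≤ (σ * κ) ^ (-(1 / (σ - 1))) * ((σ - 1) / σ) := by
  have hσ0 : 0 < σ := lt_trans one_pos hσ
  have hσκ : 0 < σ * κ := mul_pos hσ0 hκ
  have hconj : σ.HolderConjugate (σ / (σ - 1)) :=
    (Real.holderConjugate_iff_eq_conjExponent hσ).2 rfl
  have h := Real.young_inequality_of_nonneg
    (mul_nonneg (Real.rpow_nonneg hσκ.le (1/σ)) ht)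
    (Real.rpow_nonneg hσκ.le (-(1/σ))) hconj
  have e1 : (σ*κ) ^ (1/σ) * t * (σ*κ) ^ (-(1/σ)) = t := by
    rw [mul_comm ((σ*κ) ^ (1/σ)) t, mul_assoc, ← Real.rpow_add hσκ]
    norm_num
  have e2 : ((σ*κ) ^ (1/σ) * t) ^ σ = (σ*κ) * t ^ σ := by
    rw [Real.mul_rpow (Real.rpow_nonneg hσκ.le _) ht, ← Real.rpow_mul hσκ.le,
      one_div_mul_cancel hσ0.ne', Real.rpow_one]
  have e3 : ((σ*κ) ^ (-(1/σ))) ^ (σ/(σ-1)) = (σ*κ) ^ (-(1/(σ-1))) := by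
    rw [← Real.rpow_mul hσκ.le]
    congr 1
    field_simp
  rw [e1, e2, e3] at h
  have e4 : σ * κ * t ^ σ / σ = κ * t ^ σ := by field_simp
  have e5 : (σ*κ) ^ (-(1/(σ-1))) / (σ/(σ-1)) = (σ*κ) ^ (-(1/(σ-1))) * ((σ-1)/σ) := by
    rw [div_eq_mul_inv _ (σ/(σ-1)), inv_div]
  rw [e4, e5] at h
  linarith

set_option maxHeartbeats 1000000 in
/-- precise two-sided bounds for `exp(T_{τ,σ,h}(k))` with the
constants `c₁ = ((σ-1)/(τσ))^{1/(σ-1)}` and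
`c₂ = h^{-(σ-1)/τ} e^{(σ-1)/σ} (σ-1)/(τσ)`. -/
theorem stmt3 (τ σ h : ℝ) (hτ : 0 < τ) (hσ : 1 < σ) (hh : 0 < h)
    (c₁ c₂ : ℝ)
    (hc₁ : c₁ = ((σ - 1) / (τ * σ)) ^ (1 / (σ - 1)))
    (hc₂ : c₂ = h ^ (-(σ - 1) / τ) * Real.exp ((σ - 1) / σ) * ((σ - 1) / (τ * σ))) :
    ∃ A₁ A₂ k₀ : ℝ, 0 < A₁ ∧ 0 < A₂ ∧ Real.exp 1 < k₀ ∧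
      (∀ k : ℝ, k₀ ≤ k → Real.exp 1 < c₂ * Real.log k) ∧
      ∀ k : ℝ, k₀ ≤ k →
        A₁ * k ^ ((1 / 2) * ((σ - 1) / σ) * c₁ *
              (Real.log k / Real.log (c₂ * Real.log k)) ^ (1 / (σ - 1))) ≤
            Real.exp (AssocT τ σ h k) ∧
          Real.exp (AssocT τ σ h k) ≤
            A₂ * k ^ (c₁ * (Real.log k / Real.log (c₂ * Real.log k)) ^ (1 / (σ - 1))) := by
  have hσ0 : 0 < σ := lt_trans one_pos hσ
  have hσ1 : 0 < σ - 1 := by linarith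
  have hτσ : 0 < (σ - 1) / (τ * σ) := div_pos hσ1 (mul_pos hτ hσ0)
  have hc₂pos : 0 < c₂ := by
    rw [hc₂]
    exact mul_pos (mul_pos (Real.rpow_pos_of_pos hh _) (Real.exp_pos _)) hτσ
  have hc₁pos : 0 < c₁ := hc₁ ▸ Real.rpow_pos_of_pos hτσ _
  set β : ℝ := h ^ (1/τ) with hβdef
  have hβpos : 0 < β := Real.rpow_pos_of_pos hh _
  set C₀ : ℝ := τ * (max β 1) ^ σ * max (Real.log β) 0 with hC₀def
  have hC₀ : 0 ≤ C₀ := by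
    apply mul_nonneg (mul_nonneg hτ.le (Real.rpow_nonneg (le_trans hβpos.le (le_max_left _ _)) _))
    exact le_max_right _ _
  set ρ : ℝ := ((σ - 1)/σ) ^ (σ - 1) with hρdef
  have hbase : 0 < (σ - 1)/σ := div_pos hσ1 hσ0
  have hbase1 : (σ - 1)/σ < 1 := by
    rw [div_lt_one hσ0]; linarith
  have hρpos : 0 < ρ := Real.rpow_pos_of_pos hbase _
  have hρlt1 : ρ < 1 := Real.rpow_lt_one hbase.le hbase1 hσ1
  -- abbreviations
  set Lf : ℝ → ℝ := fun k => Real.log k with hLfdef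
  set Mf : ℝ → ℝ := fun k => Real.log (c₂ * Real.log k) with hMfdef
  set af : ℝ → ℝ := fun k => c₁ * (Real.log k / Real.log (c₂ * Real.log k)) ^ (1/(σ-1)) with hafdef
  -- tendsto facts
  have hLtop : Tendsto Real.log atTop atTop := Real.tendsto_log_atTop
  have hcL : Tendsto (fun k : ℝ => c₂ * Real.log k) atTop atTop := hLtop.const_mul_atTop hc₂pos
  have hMtop : Tendsto Mf atTop atTop := Real.tendsto_log_atTop.comp hcL
  have hQuot : Tendsto (fun k : ℝ => Real.log k / Real.log (c₂ * Real.log k)) atTop atTop := by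
    have hlit : (fun y : ℝ => Real.log (c₂ * y)) =o[atTop] (id : ℝ → ℝ) := by
      have h1 : (fun y : ℝ => Real.log (c₂ * y)) =ᶠ[atTop] fun y => Real.log c₂ + Real.log y := by
        filter_upwards [eventually_gt_atTop 0] with y hy
        rw [Real.log_mul hc₂pos.ne' hy.ne']
      refine Asymptotics.IsLittleO.congr' ?_ h1.symm EventuallyEq.rfl
      exact (Asymptotics.isLittleO_const_id_atTop _).add Real.isLittleO_log_id_atTop
    have hML : (fun k : ℝ => Real.log (c₂ * Real.log k)) =o[atTop] Real.log :=
      hlit.comp_tendsto hLtop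
    have hdiv : Tendsto (fun k : ℝ => Real.log (c₂ * Real.log k) / Real.log k) atTop (nhds 0) :=
      hML.tendsto_div_nhds_zero
    have hpos : ∀ᶠ k : ℝ in atTop, 0 < Real.log (c₂ * Real.log k) / Real.log k := by
      filter_upwards [hMtop.eventually_gt_atTop 0, hLtop.eventually_gt_atTop 0] with k h1 h2
      exact div_pos h1 h2
    have hinv : Tendsto (fun k : ℝ => (Real.log (c₂ * Real.log k) / Real.log k)⁻¹) atTop atTop := by
      refine Filter.Tendsto.inv_tendsto_nhdsGT_zero ?_
      rw [tendsto_nhdsWithin_iff]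
      exact ⟨hdiv, hpos⟩
    refine hinv.congr (fun k => ?_)
    rw [inv_div]
  have hatop : Tendsto af atTop atTop := by
    refine Filter.Tendsto.const_mul_atTop hc₁pos ?_
    exact (tendsto_rpow_atTop (by positivity)).comp hQuot
  -- eventual conditions
  have EV1 : ∀ᶠ k : ℝ in atTop, Real.exp 1 < k := eventually_gt_atTop _
  have EV2 : ∀ᶠ k : ℝ in atTop, Real.exp 1 < c₂ * Real.log k := hcL.eventually_gt_atTop _
  have hlogbound : ∀ ε : ℝ, 0 < ε → ∀ᶠ y : ℝ in atTop, Real.log y ≤ ε * y := by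
    intro ε hε
    filter_upwards [Real.isLittleO_log_id_atTop.bound hε, eventually_ge_atTop (0:ℝ)] with y h1 h2
    calc Real.log y ≤ ‖Real.log y‖ := le_norm_self _
      _ ≤ ε * ‖id y‖ := h1
      _ = ε * y := by simp [abs_of_nonneg h2]
  have EV3 : ∀ᶠ k : ℝ in atTop, ρ * Mf k ≤ Mf k - Real.log (Mf k) - (σ-1)/σ := by
    have hy : ∀ᶠ y : ℝ in atTop, ρ * y ≤ y - Real.log y - (σ-1)/σ := by
      have hε : 0 < (1 - ρ)/2 := by linarith
      filter_upwards [hlogbound _ hε, eventually_ge_atTop (2/(1-ρ))] with y h1 h2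
      have h3 : 1 ≤ (1-ρ)/2 * y := by
        rw [div_le_iff₀ (by linarith)] at h2
        linarith
      have h4 : (σ-1)/σ ≤ 1 := hbase1.le
      linarith
    exact hMtop.eventually hy
  have EV4 : ∀ᶠ k : ℝ in atTop, σ - 1 ≤ Mf k - Real.log (Mf k) - (σ-1)/σ := by
    have hy : ∀ᶠ y : ℝ in atTop, σ - 1 ≤ y - Real.log y - (σ-1)/σ := by
      filter_upwards [hlogbound _ (by norm_num : (0:ℝ) < 1/2), eventually_ge_atTop (2*σ)]
        with y h1 h2
      have h4 : (σ-1)/σ ≤ 1 := hbase1.le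
      linarith
    exact hMtop.eventually hy
  have EV5 : ∀ᶠ k : ℝ in atTop, (1 + 1/(af k)) ^ (σ+1) ≤ (σ+1)/2 := by
    have hy : ∀ᶠ t : ℝ in atTop, (1 + 1/t) ^ (σ+1) ≤ (σ+1)/2 := by
      have h1 : Tendsto (fun t : ℝ => (1 + 1/t) ^ (σ+1)) atTop (nhds 1) := by
        have h2 : Tendsto (fun t : ℝ => 1 + 1/t) atTop (nhds 1) := by
          have := tendsto_inv_atTop_zero (𝕜 := ℝ)
          have h3 := this.const_add (1:ℝ)
          simpa [one_div] using h3
        have h4 := h2.rpow_const (p := σ+1) (Or.inr (by linarith))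
        simpa using h4
      have h5 : (1:ℝ) < (σ+1)/2 := by
        rw [lt_div_iff₀ (by norm_num : (0:ℝ) < 2)]; linarith
      filter_upwards [h1.eventually_lt_const h5] with t ht using ht.le
    exact hatop.eventually hy
  have EV6 : ∀ᶠ k : ℝ in atTop, 1 ≤ af k := hatop.eventually_ge_atTop 1
  obtain ⟨k₀, hk₀⟩ := eventually_atTop.1 (((((EV1.and EV2).and EV3).and EV4).and EV5).and EV6)
  refine ⟨1, Real.exp C₀, k₀, one_pos, Real.exp_pos _, ((((((hk₀ k₀ le_rfl).1).1).1).1).1),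
    fun k hk => (((((hk₀ k hk).1).1).1).1).2, fun k hk => ?_⟩
  obtain ⟨⟨⟨⟨⟨hek, heM⟩, hE3⟩, hE4⟩, hE5⟩, hE6⟩ := hk₀ k hk
  clear hk₀ EV1 EV2 EV3 EV4 EV5 EV6 hatop hQuot hMtop hcL hLtop hlogbound hk
  -- per-k setup
  simp only [hLfdef, hMfdef, hafdef] at hE3 hE4 hE5 hE6 ⊢
  have hkpos : 0 < k := lt_trans (Real.exp_pos 1) hek
  set L : ℝ := Real.log k with hLdef
  have hL1 : 1 < L := (Real.lt_log_iff_exp_lt hkpos).2 (by simpa using hek)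
  have hLpos : 0 < L := by linarith
  have hc₂L : 0 < c₂ * L := lt_trans (Real.exp_pos 1) heM
  set M : ℝ := Real.log (c₂ * L) with hMdef
  have hM1 : 1 < M := (Real.lt_log_iff_exp_lt hc₂L).2 (by simpa using heM)
  have hMpos : 0 < M := by linarith
  have hLM : 0 < L / M := div_pos hLpos hMpos
  set X : ℝ := (L / M) ^ (1/(σ-1)) with hXdef
  have hXpos : 0 < X := Real.rpow_pos_of_pos hLM _
  set a : ℝ := c₁ * X with hadef
  have hapos : 0 < a := mul_pos hc₁pos hXpos
  have ha1 : 1 ≤ a := hE6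
  set A : ℝ := M - Real.log M - (σ-1)/σ with hAdef
  have hApos : 0 < A := lt_of_lt_of_le hσ1 hE4
  have hAM : A ≤ M := by
    have : 0 ≤ Real.log M := Real.log_nonneg hM1.le
    have : 0 ≤ (σ-1)/σ := hbase.le
    rw [hAdef]; linarith
  -- a^(σ-1)
  have hXσ : X ^ (σ-1) = L / M := by
    rw [hXdef, ← Real.rpow_mul hLM.le, one_div_mul_cancel hσ1.ne', Real.rpow_one]
  have haσ1 : a ^ (σ-1) = ((σ-1)/(τ*σ)) * (L/M) := by
    rw [hadef, Real.mul_rpow hc₁pos.le hXpos.le, hXσ, hc₁, ← Real.rpow_mul hτσ.le,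
      one_div_mul_cancel hσ1.ne', Real.rpow_one]
  have haσ : a ^ σ = a * (((σ-1)/(τ*σ)) * (L/M)) := by
    have h1 : a ^ σ = a ^ ((1:ℝ) + (σ-1)) := by norm_num
    rw [h1, Real.rpow_add hapos, Real.rpow_one, haσ1]
  -- key log identity
  have hlogβ : Real.log β = (1/τ) * Real.log h := by rw [hβdef, Real.log_rpow hh]
  have hA : (σ-1) * Real.log (a/β) = A := by
    have hlogc₂ : Real.log c₂ =
        (-(σ-1)/τ) * Real.log h + (σ-1)/σ + Real.log ((σ-1)/(τ*σ)) := by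
      rw [hc₂, Real.log_mul (by positivity) hτσ.ne', Real.log_mul (by positivity)
        (Real.exp_pos _).ne', Real.log_rpow hh, Real.log_exp]
    have hM_eq : M = Real.log c₂ + Real.log L := by
      rw [hMdef, Real.log_mul hc₂pos.ne' hLpos.ne']
    have hloga : Real.log a =
        (1/(σ-1)) * Real.log ((σ-1)/(τ*σ)) + (1/(σ-1)) * (Real.log L - Real.log M) := by
      rw [hadef, Real.log_mul hc₁pos.ne' hXpos.ne', hc₁, Real.log_rpow hτσ, hXdef,
        Real.log_rpow hLM, Real.log_div hLpos.ne' hMpos.ne']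
    rw [hAdef, Real.log_div hapos.ne' hβpos.ne', hloga, hlogβ, hM_eq, hlogc₂]
    field_simp
    ring
  have hlogaβ : Real.log (a/β) = A / (σ-1) := by
    rw [← hA]; field_simp
  have hlogaβ1 : 1 ≤ Real.log (a/β) := by
    rw [hlogaβ, le_div_iff₀ hσ1]; linarith
  have hβa : β ≤ a := by
    have h1 : 1 < a / β := by
      rcases lt_or_ge 1 (a/β) with hcase | hcase
      · exact hcase
      · exfalso
        have := Real.log_le_log (by positivity) hcase
        simp only [Real.log_one] at this
        linarith
    rw [lt_div_iff₀ hβpos] at h1; linarith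
  -- value of τ a^σ log(a/β)
  have hτaval : τ * a ^ σ * Real.log (a/β) = a * L * A / (σ * M) := by
    rw [haσ, hlogaβ]
    field_simp
  -- the summand
  set g : ℕ → ℝ := fun p : ℕ =>
    Real.log (h ^ ((p : ℝ) ^ σ) * k ^ p / (p : ℝ) ^ (τ * (p : ℝ) ^ σ)) with hgdef
  have hT : AssocT τ σ h k = ⨆ p, g p := rfl
  have hg0 : g 0 = 0 := by
    simp only [hgdef, Nat.cast_zero, pow_zero, Real.zero_rpow hσ0.ne', mul_zero,
      Real.rpow_zero, mul_one, div_one, Real.log_one]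
  have hgform : ∀ q : ℕ, 0 < q → g q = q * L - τ * (q:ℝ) ^ σ * Real.log ((q:ℝ)/β) := by
    intro q hq
    have hq0 : (0:ℝ) < q := Nat.cast_pos.2 hq
    have h1 : (0:ℝ) < h ^ ((q:ℝ) ^ σ) := Real.rpow_pos_of_pos hh _
    have h2 : (0:ℝ) < k ^ q := pow_pos hkpos q
    have h3 : (0:ℝ) < (q:ℝ) ^ (τ * (q:ℝ) ^ σ) := Real.rpow_pos_of_pos hq0 _
    rw [hgdef]
    simp only []
    rw [Real.log_div (by positivity) h3.ne', Real.log_mul h1.ne' h2.ne',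
      Real.log_rpow hh, Real.log_pow, Real.log_rpow hq0,
      Real.log_div hq0.ne' hβpos.ne', hlogβ]
    field_simp
    ring
  -- upper real-variable estimate
  have hupper_x : ∀ x : ℝ, 1 ≤ x → x * L - τ * x ^ σ * Real.log (x/β) ≤ a * L + C₀ := by
    intro x hx
    have hx0 : 0 < x := lt_of_lt_of_le one_pos hx
    rcases le_or_gt x a with hxa | hax
    · -- x ≤ a
      have h1 : -(τ * x ^ σ * Real.log (x/β)) ≤ C₀ := by
        rcases le_or_gt β x with hβx | hxβ
        · have h2 : 0 ≤ Real.log (x/β) := Real.log_nonneg ((one_le_div hβpos).2 hβx)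
          have h3 : 0 ≤ τ * x ^ σ * Real.log (x/β) := by positivity
          linarith
        · have hβ1 : 1 < β := lt_of_le_of_lt hx hxβ
          have h2 : -(τ * x ^ σ * Real.log (x/β)) = τ * x ^ σ * Real.log (β/x) := by
            rw [Real.log_div hx0.ne' hβpos.ne', Real.log_div hβpos.ne' hx0.ne']; ring
          rw [h2, hC₀def]
          have h3 : x ^ σ ≤ (max β 1) ^ σ :=
            Real.rpow_le_rpow hx0.le (le_trans hxβ.le (le_max_left _ _)) hσ0.le
          have h4 : Real.log (β/x) ≤ max (Real.log β) 0 := by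
            rw [Real.log_div hβpos.ne' hx0.ne']
            have := Real.log_nonneg hx
            have := le_max_left (Real.log β) 0
            linarith
          have h5 : 0 ≤ Real.log (β/x) :=
            Real.log_nonneg ((one_le_div hx0).2 hxβ.le)
          calc τ * x ^ σ * Real.log (β/x) ≤ τ * (max β 1) ^ σ * Real.log (β/x) :=
                mul_le_mul_of_nonneg_right (mul_le_mul_of_nonneg_left h3 hτ.le) h5
            _ ≤ τ * (max β 1) ^ σ * max (Real.log β) 0 :=
                mul_le_mul_of_nonneg_left h4 (by positivity)
      have h7 : x * L ≤ a * L := mul_le_mul_of_nonneg_right hxa hLpos.le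
      linarith
    · -- a < x
      have hxβ : β ≤ x := le_trans hβa hax.le
      set t : ℝ := x / a with htdef
      have ht1 : 1 ≤ t := (one_le_div hapos).2 hax.le
      have ht0 : 0 ≤ t := by linarith
      have hxat : x = a * t := by rw [htdef, mul_div_cancel₀ _ hapos.ne']
      have hxσ : x ^ σ = a ^ σ * t ^ σ := by
        rw [hxat, Real.mul_rpow hapos.le ht0]
      have hlogle : Real.log (a/β) ≤ Real.log (x/β) := by
        apply Real.log_le_log (by positivity)
        exact div_le_div_of_nonneg_right hax.le hβpos.le
      have h1 : x * L - τ * x ^ σ * Real.log (x/β) ≤ x * L - τ * x ^ σ * Real.log (a/β) := by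
        have h2 : 0 ≤ τ * x ^ σ := by positivity
        have := mul_le_mul_of_nonneg_left hlogle h2
        linarith
      have h3 : x * L - τ * x ^ σ * Real.log (a/β)
          = a * L * (t - (A/(σ*M)) * t ^ σ) := by
        rw [hxσ, hxat]
        have h4 : τ * (a ^ σ * t ^ σ) * Real.log (a/β)
            = (τ * a ^ σ * Real.log (a/β)) * t ^ σ := by ring
        rw [h4, hτaval]
        field_simp
      have hκpos : 0 < A/(σ*M) := by positivity
      have hyoung := young_aux_stmt3 hσ hκpos ht0
      have h5 : σ * (A/(σ*M)) = A / M := by field_simp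
      have h6 : (A/M) ^ (-(1/(σ-1))) * ((σ-1)/σ) ≤ 1 := by
        have hAMpos : 0 < A/M := by positivity
        have h7 : ρ ≤ A/M := by
          rw [le_div_iff₀ hMpos]; linarith [hE3]
        have h8 : (A/M) ^ (-(1/(σ-1))) ≤ ρ ^ (-(1/(σ-1))) := by
          apply Real.rpow_le_rpow_of_nonpos hρpos h7
          exact neg_nonpos.mpr (by positivity)
        have h9 : ρ ^ (-(1/(σ-1))) = σ/(σ-1) := by
          rw [hρdef, ← Real.rpow_mul hbase.le]
          have : (σ-1) * -(1/(σ-1)) = -1 := by field_simp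
          rw [this, Real.rpow_neg_one, inv_div]
        rw [h9] at h8
        calc (A/M) ^ (-(1/(σ-1))) * ((σ-1)/σ) ≤ σ/(σ-1) * ((σ-1)/σ) :=
              mul_le_mul_of_nonneg_right h8 hbase.le
          _ = 1 := by field_simp
      have h10 : t - (A/(σ*M)) * t ^ σ ≤ 1 := by
        calc t - (A/(σ*M)) * t ^ σ
            ≤ (σ * (A/(σ*M))) ^ (-(1/(σ-1))) * ((σ-1)/σ) := hyoung
          _ = (A/M) ^ (-(1/(σ-1))) * ((σ-1)/σ) := by rw [h5]
          _ ≤ 1 := h6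
      have haL : 0 ≤ a * L := by positivity
      calc x * L - τ * x ^ σ * Real.log (x/β)
          ≤ x * L - τ * x ^ σ * Real.log (a/β) := h1
        _ = a * L * (t - (A/(σ*M)) * t ^ σ) := h3
        _ ≤ a * L * 1 := mul_le_mul_of_nonneg_left h10 haL
        _ ≤ a * L + C₀ := by linarith
  -- boundedness of g
  have hgbdd : ∀ q : ℕ, g q ≤ a * L + C₀ := by
    intro q
    rcases Nat.eq_zero_or_pos q with rfl | hq
    · rw [hg0]; positivity
    · rw [hgform q hq]
      exact hupper_x q (by exact_mod_cast hq)
  have hbdd : BddAbove (Set.range g) := ⟨a * L + C₀, by rintro _ ⟨q, rfl⟩; exact hgbdd q⟩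
  -- upper bound
  have hTub : AssocT τ σ h k ≤ a * L + C₀ := by
    rw [hT]; exact ciSup_le hgbdd
  -- lower bound: p = ⌈a⌉
  set p : ℕ := ⌈a⌉₊ with hpdef
  have hp0 : 0 < p := Nat.ceil_pos.2 hapos
  have hpge : a ≤ (p:ℝ) := Nat.le_ceil a
  have hple : (p:ℝ) ≤ a + 1 := (Nat.ceil_lt_add_one hapos.le).le
  have hinva : 0 < 1/a := by positivity
  have hglow : a * L * ((σ-1)/(2*σ)) ≤ g p := by
    rw [hgform p hp0]
    have hpβ : β ≤ (p:ℝ) := le_trans hβa hpge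
    have hp0' : (0:ℝ) < p := lt_of_lt_of_le hβpos hpβ
    -- τ p^σ log(p/β) ≤ τ (a+1)^σ log((a+1)/β)
    have hmono : τ * (p:ℝ) ^ σ * Real.log ((p:ℝ)/β)
        ≤ τ * (a+1) ^ σ * Real.log ((a+1)/β) := by
      have h1 : (p:ℝ) ^ σ ≤ (a+1) ^ σ := Real.rpow_le_rpow hp0'.le hple hσ0.le
      have h2 : Real.log ((p:ℝ)/β) ≤ Real.log ((a+1)/β) := by
        apply Real.log_le_log (by positivity)
        exact div_le_div_of_nonneg_right hple hβpos.le
      have h3 : 0 ≤ Real.log ((p:ℝ)/β) := Real.log_nonneg ((one_le_div hβpos).2 hpβ)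
      have h4 : 0 ≤ (p:ℝ) ^ σ := by positivity
      have h5 : τ * (p:ℝ) ^ σ ≤ τ * (a+1) ^ σ := mul_le_mul_of_nonneg_left h1 hτ.le
      exact mul_le_mul h5 h2 h3 (by positivity)
    -- bound τ (a+1)^σ log((a+1)/β)
    have hsplit : (a+1) ^ σ = a ^ σ * (1 + 1/a) ^ σ := by
      rw [← Real.mul_rpow hapos.le (by positivity)]
      congr 1
      field_simp
    have hlogsplit : Real.log ((a+1)/β) = Real.log (a/β) + Real.log (1 + 1/a) := by
      rw [← Real.log_mul (by positivity) (by positivity)]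
      congr 1
      field_simp
    have hlog1a : Real.log (1 + 1/a) ≤ 1/a := by
      have := Real.log_le_sub_one_of_pos (show (0:ℝ) < 1 + 1/a by positivity)
      linarith
    have hstep1 : Real.log ((a+1)/β) ≤ Real.log (a/β) * (1 + 1/a) := by
      rw [hlogsplit]
      have h0 : 1/a ≤ Real.log (a/β) * (1/a) := le_mul_of_one_le_left hinva.le hlogaβ1
      have : Real.log (a/β) * (1 + 1/a) = Real.log (a/β) + Real.log (a/β) * (1/a) := by ring
      linarith
    have hstep2 : τ * (a+1) ^ σ * Real.log ((a+1)/β)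
        ≤ (τ * a ^ σ * Real.log (a/β)) * ((1 + 1/a) ^ σ * (1 + 1/a)) := by
      rw [hsplit]
      have h6 : (0:ℝ) ≤ τ * (a ^ σ * (1 + 1/a) ^ σ) := by positivity
      calc τ * (a ^ σ * (1 + 1/a) ^ σ) * Real.log ((a+1)/β)
          ≤ τ * (a ^ σ * (1 + 1/a) ^ σ) * (Real.log (a/β) * (1 + 1/a)) :=
            mul_le_mul_of_nonneg_left hstep1 h6
        _ = (τ * a ^ σ * Real.log (a/β)) * ((1 + 1/a) ^ σ * (1 + 1/a)) := by ring
    have hexp : (1 + 1/a) ^ σ * (1 + 1/a) = (1 + 1/a) ^ (σ+1) := by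
      rw [Real.rpow_add (by positivity : (0:ℝ) < 1 + 1/a), Real.rpow_one]
    have hstep3 : (τ * a ^ σ * Real.log (a/β)) * ((1 + 1/a) ^ σ * (1 + 1/a))
        ≤ (a * L / σ) * ((σ+1)/2) := by
      rw [hexp, hτaval]
      have h9 : a * L * A / (σ * M) ≤ a * L / σ := by
        rw [div_le_div_iff₀ (by positivity) hσ0]
        have h9' : a * L * A ≤ a * L * M := mul_le_mul_of_nonneg_left hAM (by positivity)
        calc a * L * A * σ ≤ a * L * M * σ := mul_le_mul_of_nonneg_right h9' hσ0.le
          _ = a * L * (σ * M) := by ring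
      have h11 : 0 ≤ (1 + 1/a) ^ (σ+1) := by positivity
      exact mul_le_mul h9 hE5 h11 (by positivity)
    have hfin : τ * (p:ℝ) ^ σ * Real.log ((p:ℝ)/β) ≤ a * L * ((σ+1)/(2*σ)) := by
      have : (a * L / σ) * ((σ+1)/2) = a * L * ((σ+1)/(2*σ)) := by field_simp
      linarith
    have hpL : a * L ≤ (p:ℝ) * L := mul_le_mul_of_nonneg_right hpge hLpos.le
    have harith : a * L - a * L * ((σ+1)/(2*σ)) = a * L * ((σ-1)/(2*σ)) := by
      field_simp
      ring
    linarith
  have hTlb : a * L * ((σ-1)/(2*σ)) ≤ AssocT τ σ h k := by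
    rw [hT]
    exact le_trans hglow (le_ciSup hbdd p)
  constructor
  · -- lower bound
    have hexp : k ^ ((1/2) * ((σ-1)/σ) * c₁ * X) = Real.exp (a * L * ((σ-1)/(2*σ))) := by
      rw [Real.rpow_def_of_pos hkpos, ← hLdef, hadef]
      congr 1
      ring
    rw [one_mul, hexp]
    exact Real.exp_le_exp.2 hTlb
  · -- upper bound
    have hexp : Real.exp C₀ * k ^ (c₁ * X) = Real.exp (a * L + C₀) := by
      rw [Real.rpow_def_of_pos hkpos, ← hLdef, ← Real.exp_add, hadef]
      congr 1
      ring
    rw [hexp]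
    exact Real.exp_le_exp.2 hTub
end

section
/- Let τ>0, σ>1 and h>0. Then T_{τ,σ,h}(k) ≤ T*_{τ,σ,h}(k) for all k>0, and there exists H ≥ h such that T*_{τ,σ,h}(k) ≤ T_{τ,σ,H}(k) for all k>0. -/
/-- The function `T*_{τ,σ,h}(k) = sup_{p∈ℕ} ln(h^{p^σ} k^p p^p / p^{τ p^σ})`,
with the `p = 0` term interpreted as `0`. -/
noncomputable def AssocTStar (τ σ h k : ℝ) : ℝ :=
  ⨆ p : ℕ, Real.log (h ^ ((p : ℝ) ^ σ) * k ^ p * (p : ℝ) ^ p / (p : ℝ) ^ (τ * (p : ℝ) ^ σ))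

open Real

private lemma stmt4_logT (τ σ h k : ℝ) (hh : 0 < h) (hk : 0 < k) (p : ℕ) (hp : 0 < p) :
    Real.log (h ^ ((p : ℝ) ^ σ) * k ^ p / (p : ℝ) ^ (τ * (p : ℝ) ^ σ)) =
    (p:ℝ)^σ * Real.log h + p * Real.log k - τ * (p:ℝ)^σ * Real.log p := by
  have hp0 : (0:ℝ) < (p:ℝ) := by exact_mod_cast hp
  rw [Real.log_div (by positivity) (by positivity), Real.log_mul (by positivity) (by positivity),
    Real.log_rpow hh, Real.log_pow, Real.log_rpow hp0]

private lemma stmt4_logS (τ σ h k : ℝ) (hh : 0 < h) (hk : 0 < k) (p : ℕ) (hp : 0 < p) :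
    Real.log (h ^ ((p : ℝ) ^ σ) * k ^ p * (p:ℝ) ^ p / (p : ℝ) ^ (τ * (p : ℝ) ^ σ)) =
    (p:ℝ)^σ * Real.log h + p * Real.log k + p * Real.log p - τ * (p:ℝ)^σ * Real.log p := by
  have hp0 : (0:ℝ) < (p:ℝ) := by exact_mod_cast hp
  rw [Real.log_div (by positivity) (by positivity), Real.log_mul (by positivity) (by positivity),
    Real.log_mul (by positivity) (by positivity),
    Real.log_rpow hh, Real.log_pow, Real.log_pow, Real.log_rpow hp0]

private lemma stmt4_keyineq (σ : ℝ) (hσ : 1 < σ) (p : ℕ) (hp : 0 < p) :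
    (p:ℝ) * Real.log p ≤ (p:ℝ)^σ * (1/(σ-1)) := by
  have hp1 : (1:ℝ) ≤ (p:ℝ) := by exact_mod_cast hp
  have hs : 0 < σ - 1 := by linarith
  have h1 : Real.log ((p:ℝ)^(σ-1)) ≤ (p:ℝ)^(σ-1) := by
    have := Real.log_le_sub_one_of_pos
      (rpow_pos_of_pos (show (0:ℝ) < (p:ℝ) by linarith) (σ-1))
    linarith
  rw [Real.log_rpow (by linarith)] at h1
  have h2 : Real.log (p:ℝ) ≤ (p:ℝ)^(σ-1) / (σ-1) := by
    rw [le_div_iff₀ hs]; linarith [h1]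
  have h3 : (p:ℝ) * Real.log p ≤ (p:ℝ) * ((p:ℝ)^(σ-1) / (σ-1)) :=
    mul_le_mul_of_nonneg_left h2 (by linarith)
  calc (p:ℝ) * Real.log p ≤ (p:ℝ) * ((p:ℝ)^(σ-1) / (σ-1)) := h3
    _ = (p:ℝ)^σ * (1/(σ-1)) := by
        rw [show σ = 1 + (σ-1) by ring, Real.rpow_add (by linarith), Real.rpow_one]
        ring_nf

private lemma stmt4_bddT (τ σ H k : ℝ) (hτ : 0 < τ) (hσ : 1 < σ) (hH : 0 < H) (hk : 0 < k) :
    BddAbove (Set.range fun p : ℕ =>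
      Real.log (H ^ ((p : ℝ) ^ σ) * k ^ p / (p : ℝ) ^ (τ * (p : ℝ) ^ σ))) := by
  set f := fun p : ℕ =>
      Real.log (H ^ ((p : ℝ) ^ σ) * k ^ p / (p : ℝ) ^ (τ * (p : ℝ) ^ σ)) with hf
  set C := (Real.log H + |Real.log k|) / τ with hC
  set N : ℕ := ⌈Real.exp C⌉₊ + 1 with hN
  have hkey : ∀ p : ℕ, N ≤ p → f p ≤ 0 := by
    intro p hp
    have hp0 : 0 < p := lt_of_lt_of_le (Nat.succ_pos _) hp
    have hpR : (0:ℝ) < (p:ℝ) := by exact_mod_cast hp0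
    have hp1 : (1:ℝ) ≤ (p:ℝ) := by exact_mod_cast hp0
    have hpe : Real.exp C ≤ (p:ℝ) := by
      calc Real.exp C ≤ (⌈Real.exp C⌉₊ : ℝ) := Nat.le_ceil _
        _ ≤ (p:ℝ) := by exact_mod_cast le_trans (Nat.le_succ _) hp
    have hlog : C ≤ Real.log p := by
      have := Real.log_le_log (Real.exp_pos C) hpe
      rwa [Real.log_exp] at this
    have hClog : Real.log H + |Real.log k| ≤ τ * Real.log p := by
      rw [hC] at hlog
      rw [div_le_iff₀ hτ] at hlog
      linarith
    have hps : (p:ℝ) ≤ (p:ℝ)^σ := by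
      calc (p:ℝ) = (p:ℝ)^(1:ℝ) := (Real.rpow_one _).symm
        _ ≤ (p:ℝ)^σ := Real.rpow_le_rpow_of_exponent_le hp1 (le_of_lt hσ)
    have hps0 : (0:ℝ) < (p:ℝ)^σ := Real.rpow_pos_of_pos hpR σ
    have hlk : (p:ℝ) * Real.log k ≤ (p:ℝ)^σ * |Real.log k| := by
      calc (p:ℝ) * Real.log k ≤ (p:ℝ) * |Real.log k| :=
            mul_le_mul_of_nonneg_left (le_abs_self _) (by linarith)
        _ ≤ (p:ℝ)^σ * |Real.log k| :=
            mul_le_mul_of_nonneg_right hps (abs_nonneg _)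
    have hfeq : f p = (p:ℝ)^σ * Real.log H + p * Real.log k - τ * (p:ℝ)^σ * Real.log p := by
      show Real.log _ = _
      exact stmt4_logT τ σ H k hH hk p hp0
    rw [hfeq]
    have : (p:ℝ)^σ * Real.log H + (p:ℝ)^σ * |Real.log k| - τ * (p:ℝ)^σ * Real.log p ≤ 0 := by
      have := mul_le_mul_of_nonneg_left hClog (le_of_lt hps0)
      nlinarith
    linarith
  have hsub : Set.range f ⊆ (f '' Set.Iio N) ∪ Set.Iic 0 := by
    rintro x ⟨p, rfl⟩
    rcases lt_or_ge p N with h | h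
    · exact Or.inl ⟨p, h, rfl⟩
    · exact Or.inr (hkey p h)
  exact (((Set.finite_Iio N).image f).bddAbove.union bddAbove_Iic).mono hsub

/-- `T_{τ,σ,h} ≤ T*_{τ,σ,h}` and there is `H ≥ h` with
`T*_{τ,σ,h} ≤ T_{τ,σ,H}` on `(0,∞)`. -/
theorem stmt4 (τ σ h : ℝ) (hτ : 0 < τ) (hσ : 1 < σ) (hh : 0 < h) :
    (∀ k : ℝ, 0 < k → AssocT τ σ h k ≤ AssocTStar τ σ h k) ∧
      ∃ H : ℝ, h ≤ H ∧ ∀ k : ℝ, 0 < k → AssocTStar τ σ h k ≤ AssocT τ σ H k := by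
  set H := h * Real.exp (1/(σ-1)) with hHdef
  have hs : 0 < σ - 1 := by linarith
  have hH0 : 0 < H := by positivity
  have hhH : h ≤ H := le_mul_of_one_le_right hh.le (Real.one_le_exp (by positivity))
  have hlogH : Real.log H = Real.log h + 1/(σ-1) := by
    rw [hHdef, Real.log_mul hh.ne' (Real.exp_pos _).ne', Real.log_exp]
  -- pointwise: T term ≤ T* term
  have pt1 : ∀ (k : ℝ), 0 < k → ∀ p : ℕ,
      Real.log (h ^ ((p : ℝ) ^ σ) * k ^ p / (p : ℝ) ^ (τ * (p : ℝ) ^ σ)) ≤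
      Real.log (h ^ ((p : ℝ) ^ σ) * k ^ p * (p : ℝ) ^ p / (p : ℝ) ^ (τ * (p : ℝ) ^ σ)) := by
    intro k hk p
    rcases Nat.eq_zero_or_pos p with rfl | hp
    · simp
    have hp1 : (1:ℝ) ≤ (p:ℝ) := by exact_mod_cast hp
    have h1 : (1:ℝ) ≤ (p:ℝ)^p := one_le_pow₀ hp1
    apply Real.log_le_log
    · positivity
    · apply div_le_div_of_nonneg_right ?_ (by positivity)
      exact le_mul_of_one_le_right (by positivity) h1
  -- pointwise: T* (with h) term ≤ T (with H) term
  have pt2 : ∀ (k : ℝ), 0 < k → ∀ p : ℕ,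
      Real.log (h ^ ((p : ℝ) ^ σ) * k ^ p * (p : ℝ) ^ p / (p : ℝ) ^ (τ * (p : ℝ) ^ σ)) ≤
      Real.log (H ^ ((p : ℝ) ^ σ) * k ^ p / (p : ℝ) ^ (τ * (p : ℝ) ^ σ)) := by
    intro k hk p
    rcases Nat.eq_zero_or_pos p with rfl | hp
    · simp [Real.zero_rpow (show σ ≠ 0 by positivity)]
    rw [stmt4_logS τ σ h k hh hk p hp, stmt4_logT τ σ H k hH0 hk p hp, hlogH]
    have := stmt4_keyineq σ hσ p hp
    nlinarith [Real.rpow_pos_of_pos (show (0:ℝ) < (p:ℝ) by exact_mod_cast hp) σ]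
  constructor
  · intro k hk
    have bddS : BddAbove (Set.range fun p : ℕ =>
        Real.log (h ^ ((p : ℝ) ^ σ) * k ^ p * (p : ℝ) ^ p / (p : ℝ) ^ (τ * (p : ℝ) ^ σ))) := by
      obtain ⟨M, hM⟩ := stmt4_bddT τ σ H k hτ hσ hH0 hk
      refine ⟨M, ?_⟩
      rintro x ⟨p, rfl⟩
      exact (pt2 k hk p).trans (hM ⟨p, rfl⟩)
    exact ciSup_le fun p => (pt1 k hk p).trans (le_ciSup bddS p)
  · refine ⟨H, hhH, fun k hk => ?_⟩
    exact ciSup_le fun p => (pt2 k hk p).trans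
      (le_ciSup (stmt4_bddT τ σ H k hτ hσ hH0 hk) p)
end

section
/- Let τ>0, σ>1 and h₁, h₂ > 0. Then there exist constants C > 0 and c > 0 such that for all k>0: T_{τ,σ,h₁}(k) + T_{τ,σ,h₂}(k) ≤ T_{τ/2^{σ-1},σ,c}(k) + ln C. -/
namespace Stmt5Aux

open Real

lemma add_rpow_le' {x y σ : ℝ} (hx : 0 ≤ x) (hy : 0 ≤ y) (hσ : 1 ≤ σ) :
    x ^ σ + y ^ σ ≤ (x + y) ^ σ := by
  lift x to NNReal using hx
  lift y to NNReal using hy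
  exact_mod_cast NNReal.add_rpow_le_rpow_add x y hσ

lemma rpow_add_le' {x y σ : ℝ} (hx : 0 ≤ x) (hy : 0 ≤ y) (hσ : 1 ≤ σ) :
    (x + y) ^ σ ≤ 2 ^ (σ - 1) * (x ^ σ + y ^ σ) := by
  lift x to NNReal using hx
  lift y to NNReal using hy
  exact_mod_cast NNReal.rpow_add_le_mul_rpow_add_rpow x y hσ

lemma term_zero (τ σ h k : ℝ) (hσ : 0 < σ) :
    Real.log (h ^ (((0:ℕ) : ℝ) ^ σ) * k ^ (0:ℕ) / ((0:ℕ) : ℝ) ^ (τ * ((0:ℕ) : ℝ) ^ σ)) = 0 := by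
  rw [Nat.cast_zero, Real.zero_rpow hσ.ne', mul_zero, Real.rpow_zero, Real.rpow_zero]
  simp

lemma term_pos (τ σ h k : ℝ) (hh : 0 < h) (hk : 0 < k) (p : ℕ) (hp : 1 ≤ p) :
    Real.log (h ^ ((p : ℝ) ^ σ) * k ^ p / (p : ℝ) ^ (τ * (p : ℝ) ^ σ)) =
      (p : ℝ) ^ σ * Real.log h + p * Real.log k - τ * (p : ℝ) ^ σ * Real.log p := by
  have hp0 : (0:ℝ) < p := by exact_mod_cast hp
  rw [Real.log_div (by positivity) (by positivity), Real.log_mul (by positivity) (by positivity),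
    Real.log_rpow hh, Real.log_pow, Real.log_rpow hp0]

lemma bdd_assoc (τ σ h k : ℝ) (hτ : 0 < τ) (hσ : 1 < σ) (hh : 0 < h) (hk : 0 < k) :
    BddAbove (Set.range fun p : ℕ =>
      Real.log (h ^ ((p : ℝ) ^ σ) * k ^ p / (p : ℝ) ^ (τ * (p : ℝ) ^ σ))) := by
  set f : ℕ → ℝ := fun p =>
      Real.log (h ^ ((p : ℝ) ^ σ) * k ^ p / (p : ℝ) ^ (τ * (p : ℝ) ^ σ)) with hf
  set A : ℝ := max (Real.log h) 0 + max (Real.log k) 0 with hA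
  have hA0 : 0 ≤ A := by positivity
  set N : ℕ := ⌈Real.exp (A / τ)⌉₊ with hN
  refine ⟨max 0 ((Finset.range (N + 1)).sup' (by simp) f), ?_⟩
  rintro x ⟨p, rfl⟩
  by_cases hp : p ≤ N
  · exact le_max_of_le_right (Finset.le_sup' f (Finset.mem_range.2 (Nat.lt_succ_of_le hp)))
  · push_neg at hp
    have hp1 : 1 ≤ p := le_trans (Nat.one_le_iff_ne_zero.2 (by positivity)) hp
    have hp1' : (1:ℝ) ≤ (p:ℝ) := by exact_mod_cast hp1
    have hp0 : (0:ℝ) < p := lt_of_lt_of_le one_pos hp1'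
    have hlogp : A / τ ≤ Real.log p := by
      have h1 : Real.exp (A / τ) ≤ (N : ℝ) := Nat.le_ceil _
      have h2 : (N : ℝ) ≤ (p : ℝ) := by exact_mod_cast hp.le
      have := Real.log_le_log (Real.exp_pos _) (h1.trans h2)
      rwa [Real.log_exp] at this
    have hAτ : A ≤ τ * Real.log p := by
      rw [div_le_iff₀ hτ] at hlogp; linarith [hlogp]
    have hmono : (p:ℝ) ≤ (p:ℝ) ^ σ := by
      calc (p:ℝ) = (p:ℝ) ^ (1:ℝ) := (Real.rpow_one _).symm
      _ ≤ (p:ℝ) ^ σ := Real.rpow_le_rpow_of_exponent_le hp1' hσ.le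
    have hPσ : (0:ℝ) ≤ (p:ℝ) ^ σ := by positivity
    have key : f p ≤ 0 := by
      rw [hf]
      simp only
      rw [Real.log_div (by positivity) (by positivity),
        Real.log_mul (by positivity) (by positivity),
        Real.log_rpow hh, Real.log_pow, Real.log_rpow hp0]
      have t1 : (p:ℝ) ^ σ * Real.log h ≤ (p:ℝ) ^ σ * max (Real.log h) 0 :=
        mul_le_mul_of_nonneg_left (le_max_left _ _) hPσ
      have t2 : (p:ℝ) * Real.log k ≤ (p:ℝ) ^ σ * max (Real.log k) 0 := by
        calc (p:ℝ) * Real.log k ≤ (p:ℝ) * max (Real.log k) 0 :=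
              mul_le_mul_of_nonneg_left (le_max_left _ _) hp0.le
        _ ≤ (p:ℝ) ^ σ * max (Real.log k) 0 :=
              mul_le_mul_of_nonneg_right hmono (le_max_right _ _)
      have t3 : (p:ℝ) ^ σ * A ≤ (p:ℝ) ^ σ * (τ * Real.log p) :=
        mul_le_mul_of_nonneg_left hAτ hPσ
      nlinarith [t1, t2, t3]
    exact key.trans (le_max_left _ _)

lemma key_ineq (τ σ L a b P Q : ℝ) (hτ : 0 < τ) (hσ : 1 < σ) (hL : 0 ≤ L)
    (ha : a ≤ L) (hb : b ≤ L) (hP : 1 ≤ P) (hQ : 1 ≤ Q) :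
    P ^ σ * a + Q ^ σ * b + τ / 2 ^ (σ - 1) * (P + Q) ^ σ * Real.log (P + Q) ≤
      (P + Q) ^ σ * (L + 2 * τ) + τ * (P ^ σ * Real.log P) + τ * (Q ^ σ * Real.log Q) := by
  have hP0 : (0:ℝ) < P := lt_of_lt_of_le one_pos hP
  have hQ0 : (0:ℝ) < Q := lt_of_lt_of_le one_pos hQ
  have hS0 : (0:ℝ) < P + Q := by linarith
  have h2pos : (0:ℝ) < 2 ^ (σ - 1) := Real.rpow_pos_of_pos two_pos _
  have hPσ : (0:ℝ) ≤ P ^ σ := (Real.rpow_pos_of_pos hP0 _).le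
  have hQσ : (0:ℝ) ≤ Q ^ σ := (Real.rpow_pos_of_pos hQ0 _).le
  have hSσ : (0:ℝ) ≤ (P + Q) ^ σ := (Real.rpow_pos_of_pos hS0 _).le
  have hlogS : 0 ≤ Real.log (P + Q) := Real.log_nonneg (by linarith)
  have e1 : P ^ σ * a + Q ^ σ * b ≤ (P + Q) ^ σ * L := by
    have : P ^ σ * a + Q ^ σ * b ≤ (P ^ σ + Q ^ σ) * L := by
      nlinarith [mul_le_mul_of_nonneg_left ha hPσ, mul_le_mul_of_nonneg_left hb hQσ]
    exact this.trans (mul_le_mul_of_nonneg_right (add_rpow_le' hP0.le hQ0.le hσ.le) hL)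
  have e2 : τ / 2 ^ (σ - 1) * (P + Q) ^ σ * Real.log (P + Q) ≤
      τ * (P ^ σ + Q ^ σ) * Real.log (P + Q) := by
    have h1 : τ / 2 ^ (σ - 1) * (P + Q) ^ σ ≤ τ / 2 ^ (σ - 1) * (2 ^ (σ - 1) * (P ^ σ + Q ^ σ)) :=
      mul_le_mul_of_nonneg_left (rpow_add_le' hP0.le hQ0.le hσ.le) (by positivity)
    have h2 : τ / 2 ^ (σ - 1) * (2 ^ (σ - 1) * (P ^ σ + Q ^ σ)) = τ * (P ^ σ + Q ^ σ) := by
      field_simp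
    rw [h2] at h1
    exact mul_le_mul_of_nonneg_right h1 hlogS
  have e3 : ∀ X : ℝ, 1 ≤ X → Real.log (P + Q) ≤ Real.log X + (P + Q) / X := by
    intro X hX
    have hX0 : (0:ℝ) < X := lt_of_lt_of_le one_pos hX
    have : Real.log (P + Q) - Real.log X = Real.log ((P + Q) / X) := (Real.log_div hS0.ne' hX0.ne').symm
    have h4 : Real.log ((P + Q) / X) ≤ (P + Q) / X - 1 :=
      Real.log_le_sub_one_of_pos (by positivity)
    linarith
  have e5 : ∀ X : ℝ, 1 ≤ X → X ≤ P + Q → X ^ σ * ((P + Q) / X) ≤ (P + Q) ^ σ := by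
    intro X hX hXS
    have hX0 : (0:ℝ) < X := lt_of_lt_of_le one_pos hX
    have h1 : X ^ σ * ((P + Q) / X) = X ^ (σ - 1) * (P + Q) := by
      rw [Real.rpow_sub hX0, Real.rpow_one]; field_simp
    rw [h1]
    calc X ^ (σ - 1) * (P + Q) ≤ (P + Q) ^ (σ - 1) * (P + Q) :=
          mul_le_mul_of_nonneg_right
            (Real.rpow_le_rpow hX0.le hXS (by linarith)) hS0.le
      _ = (P + Q) ^ σ := by
          rw [← Real.rpow_add_one hS0.ne', sub_add_cancel]
  have e6 : τ * (P ^ σ + Q ^ σ) * Real.log (P + Q) ≤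
      τ * (P ^ σ * Real.log P) + τ * (Q ^ σ * Real.log Q) + 2 * τ * (P + Q) ^ σ := by
    have fP : P ^ σ * Real.log (P + Q) ≤ P ^ σ * Real.log P + (P + Q) ^ σ := by
      have := mul_le_mul_of_nonneg_left (e3 P hP) hPσ
      have := e5 P hP (by linarith)
      nlinarith
    have fQ : Q ^ σ * Real.log (P + Q) ≤ Q ^ σ * Real.log Q + (P + Q) ^ σ := by
      have := mul_le_mul_of_nonneg_left (e3 Q hQ) hQσ
      have := e5 Q hQ (by linarith)
      nlinarith
    nlinarith [mul_le_mul_of_nonneg_left fP hτ.le, mul_le_mul_of_nonneg_left fQ hτ.le]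
  nlinarith [e1, e2, e6]

end Stmt5Aux

open Stmt5Aux in
/-- subadditivity-type estimate: there are `C, c > 0` with
`T_{τ,σ,h₁}(k) + T_{τ,σ,h₂}(k) ≤ T_{τ/2^{σ-1},σ,c}(k) + ln C` for all `k > 0`. -/
theorem stmt5 (τ σ h₁ h₂ : ℝ) (hτ : 0 < τ) (hσ : 1 < σ) (hh₁ : 0 < h₁) (hh₂ : 0 < h₂) :
    ∃ C c : ℝ, 0 < C ∧ 0 < c ∧
      ∀ k : ℝ, 0 < k →
        AssocT τ σ h₁ k + AssocT τ σ h₂ k ≤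
          AssocT (τ / (2 : ℝ) ^ (σ - 1)) σ c k + Real.log C := by
  set M : ℝ := max h₁ (max h₂ 1) with hM
  have hM1 : (1:ℝ) ≤ M := le_max_of_le_right (le_max_right _ _)
  have hM0 : (0:ℝ) < M := lt_of_lt_of_le one_pos hM1
  set c : ℝ := M * Real.exp (2 * τ) with hc
  have hc0 : 0 < c := by positivity
  refine ⟨1, c, one_pos, hc0, ?_⟩
  intro k hk
  rw [Real.log_one, add_zero]
  have h2pos : (0:ℝ) < (2:ℝ) ^ (σ - 1) := Real.rpow_pos_of_pos two_pos _
  have h21 : (1:ℝ) ≤ (2:ℝ) ^ (σ - 1) := by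
    calc (1:ℝ) = (2:ℝ) ^ (0:ℝ) := (Real.rpow_zero 2).symm
    _ ≤ (2:ℝ) ^ (σ - 1) := Real.rpow_le_rpow_of_exponent_le one_le_two (by linarith)
  set τ' : ℝ := τ / (2:ℝ) ^ (σ - 1) with hτ'def
  have hτ' : 0 < τ' := by positivity
  have hτ'le : τ' ≤ τ := div_le_self hτ.le h21
  have hlogc : Real.log c = Real.log M + 2 * τ := by
    rw [hc, Real.log_mul hM0.ne' (Real.exp_pos _).ne', Real.log_exp]
  have hlogM : 0 ≤ Real.log M := Real.log_nonneg hM1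
  have hh₁M : Real.log h₁ ≤ Real.log M := Real.log_le_log hh₁ (le_max_left _ _)
  have hh₂M : Real.log h₂ ≤ Real.log M := Real.log_le_log hh₂
    (le_max_of_le_right (le_max_left _ _))
  have hh₁c : Real.log h₁ ≤ Real.log c := by rw [hlogc]; linarith
  have hh₂c : Real.log h₂ ≤ Real.log c := by rw [hlogc]; linarith
  set f₁ : ℕ → ℝ := fun p =>
    Real.log (h₁ ^ ((p : ℝ) ^ σ) * k ^ p / (p : ℝ) ^ (τ * (p : ℝ) ^ σ)) with hf₁
  set f₂ : ℕ → ℝ := fun p =>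
    Real.log (h₂ ^ ((p : ℝ) ^ σ) * k ^ p / (p : ℝ) ^ (τ * (p : ℝ) ^ σ)) with hf₂
  set f₃ : ℕ → ℝ := fun p =>
    Real.log (c ^ ((p : ℝ) ^ σ) * k ^ p / (p : ℝ) ^ (τ' * (p : ℝ) ^ σ)) with hf₃
  have B3 : BddAbove (Set.range f₃) := bdd_assoc τ' σ c k hτ' hσ hc0 hk
  -- single-index comparison (used when one index is zero)
  have single : ∀ (h : ℝ), 0 < h → Real.log h ≤ Real.log c → ∀ p : ℕ, 1 ≤ p →
      Real.log (h ^ ((p : ℝ) ^ σ) * k ^ p / (p : ℝ) ^ (τ * (p : ℝ) ^ σ)) ≤ f₃ p := by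
    intro h hh hhc p hp
    have hp1' : (1:ℝ) ≤ (p:ℝ) := by exact_mod_cast hp
    have hlogp : 0 ≤ Real.log (p:ℝ) := Real.log_nonneg hp1'
    have hPσ : (0:ℝ) ≤ (p:ℝ) ^ σ := by positivity
    rw [term_pos τ σ h k hh hk p hp, hf₃]
    simp only
    rw [term_pos τ' σ c k hc0 hk p hp]
    have t1 : (p:ℝ) ^ σ * Real.log h ≤ (p:ℝ) ^ σ * Real.log c :=
      mul_le_mul_of_nonneg_left hhc hPσ
    have t2 : τ' * ((p:ℝ) ^ σ * Real.log (p:ℝ)) ≤ τ * ((p:ℝ) ^ σ * Real.log (p:ℝ)) :=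
      mul_le_mul_of_nonneg_right hτ'le (by positivity)
    nlinarith [t1, t2]
  have H : ∀ p q : ℕ, f₁ p + f₂ q ≤ f₃ (p + q) := by
    intro p q
    rcases Nat.eq_zero_or_pos p with hp | hp
    · rcases Nat.eq_zero_or_pos q with hq | hq
      · subst hp; subst hq
        have z1 : f₁ 0 = 0 := term_zero τ σ h₁ k (by linarith)
        have z2 : f₂ 0 = 0 := term_zero τ σ h₂ k (by linarith)
        have z3 : f₃ 0 = 0 := term_zero τ' σ c k (by linarith)
        rw [Nat.add_zero, z1, z2, z3]
        norm_num
      · subst hp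
        have z1 : f₁ 0 = 0 := term_zero τ σ h₁ k (by linarith)
        rw [z1, zero_add, zero_add]
        exact single h₂ hh₂ hh₂c q hq
    · rcases Nat.eq_zero_or_pos q with hq | hq
      · subst hq
        have z2 : f₂ 0 = 0 := term_zero τ σ h₂ k (by linarith)
        rw [z2, add_zero, Nat.add_zero]
        exact single h₁ hh₁ hh₁c p hp
      · -- both positive : use the key inequality
        have hp1' : (1:ℝ) ≤ (p:ℝ) := by exact_mod_cast hp
        have hq1' : (1:ℝ) ≤ (q:ℝ) := by exact_mod_cast hq
        have hpq : 1 ≤ p + q := by omega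
        have hcast : ((p + q : ℕ) : ℝ) = (p:ℝ) + (q:ℝ) := by push_cast; ring
        rw [hf₁, hf₂, hf₃]
        simp only
        rw [term_pos τ σ h₁ k hh₁ hk p hp, term_pos τ σ h₂ k hh₂ hk q hq,
          term_pos τ' σ c k hc0 hk (p + q) hpq, hcast]
        have key := key_ineq τ σ (Real.log M) (Real.log h₁) (Real.log h₂) (p:ℝ) (q:ℝ)
          hτ hσ hlogM hh₁M hh₂M hp1' hq1'
        have hkr : ((p:ℝ) + (q:ℝ)) * Real.log k = (p:ℝ) * Real.log k + (q:ℝ) * Real.log k := by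
          ring
        have hcc : ((p:ℝ) + (q:ℝ)) ^ σ * Real.log c
            = ((p:ℝ) + (q:ℝ)) ^ σ * (Real.log M + 2 * τ) := by rw [hlogc]
        push_cast
        rw [hcc]
        nlinarith [key]
  -- assemble via suprema
  have le3 : ∀ n : ℕ, f₃ n ≤ AssocT τ' σ c k := fun n => le_ciSup B3 n
  have step1 : ∀ p : ℕ, AssocT τ σ h₂ k ≤ AssocT τ' σ c k - f₁ p := by
    intro p
    refine ciSup_le fun q => ?_
    have := (H p q).trans (le3 (p + q))
    linarith
  have step2 : AssocT τ σ h₁ k ≤ AssocT τ' σ c k - AssocT τ σ h₂ k := by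
    refine ciSup_le fun p => ?_
    linarith [step1 p]
  linarith [step2]
end

section
/- Let τ>0, σ>1 and h>0. Then there exists H>0 such that for all k>0 and l>0: T_{τ,σ,H}(l) ≤ T_{τ,σ,h}(1/k) + k·l. -/
lemma term_eq {τ σ a y : ℝ} (ha : 0 < a) (hy : 0 < y) {p : ℕ} (hp : 1 ≤ p) :
    Real.log (a ^ ((p : ℝ) ^ σ) * y ^ p / (p : ℝ) ^ (τ * (p : ℝ) ^ σ)) =
      (p : ℝ) ^ σ * Real.log a + p * Real.log y - τ * (p : ℝ) ^ σ * Real.log p := by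
  have hp0 : (0 : ℝ) < p := by exact_mod_cast hp
  rw [Real.log_div (by positivity) (by positivity),
    Real.log_mul (by positivity) (by positivity),
    Real.log_rpow ha, Real.log_pow, Real.log_rpow hp0]

lemma term_zero {τ σ a y : ℝ} (hσ : 0 < σ) :
    Real.log (a ^ ((0 : ℕ) : ℝ) ^ σ * y ^ (0 : ℕ) / ((0 : ℕ) : ℝ) ^ (τ * ((0 : ℕ) : ℝ) ^ σ)) = 0 := by
  simp [Real.zero_rpow hσ.ne']

lemma bdd_of_eventually (f : ℕ → ℝ) (N : ℕ) (C : ℝ) (h : ∀ p, N ≤ p → f p ≤ C) :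
    BddAbove (Set.range f) := by
  refine ⟨max C ((Finset.range (N + 1)).sup' ⟨0, by simp⟩ f), ?_⟩
  rintro x ⟨p, rfl⟩
  rcases le_or_gt N p with hp | hp
  · exact le_max_of_le_left (h p hp)
  · exact le_max_of_le_right (Finset.le_sup' f (by simp [Finset.mem_range]; omega))

lemma assoc_bdd (τ σ a y : ℝ) (hτ : 0 < τ) (hσ : 1 < σ) (ha : 0 < a) (hy : 0 < y) :
    BddAbove (Set.range fun p : ℕ =>
      Real.log (a ^ ((p : ℝ) ^ σ) * y ^ p / (p : ℝ) ^ (τ * (p : ℝ) ^ σ))) := by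
  set A := max (Real.log a) 0 with hA
  set B := max (Real.log y) 0 with hB
  refine bdd_of_eventually _ (⌈Real.exp ((A + B) / τ)⌉₊ + 1) 0 ?_
  intro p hp
  have hp1 : 1 ≤ p := le_trans (by omega) hp
  have hp0 : (0 : ℝ) < p := by exact_mod_cast hp1
  have hp1' : (1 : ℝ) ≤ p := by exact_mod_cast hp1
  rw [term_eq ha hy hp1]
  have hpe : Real.exp ((A + B) / τ) ≤ (p : ℝ) := by
    calc Real.exp ((A + B) / τ) ≤ ⌈Real.exp ((A + B) / τ)⌉₊ := Nat.le_ceil _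
    _ ≤ (p : ℝ) := by exact_mod_cast le_trans (by omega) hp
  have hlogp : (A + B) / τ ≤ Real.log p := by
    rw [← Real.log_exp ((A + B) / τ)]
    exact Real.log_le_log (Real.exp_pos _) hpe
  have hABlog : A + B ≤ τ * Real.log p := by
    rw [div_le_iff₀ hτ] at hlogp; linarith [hlogp]
  have hpow : (p : ℝ) ≤ (p : ℝ) ^ σ := by
    calc (p : ℝ) = (p : ℝ) ^ (1 : ℝ) := (Real.rpow_one _).symm
    _ ≤ (p : ℝ) ^ σ := Real.rpow_le_rpow_of_exponent_le hp1' hσ.le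
  have hpowpos : (0 : ℝ) < (p : ℝ) ^ σ := Real.rpow_pos_of_pos hp0 σ
  have h1 : (p : ℝ) ^ σ * Real.log a ≤ (p : ℝ) ^ σ * A :=
    mul_le_mul_of_nonneg_left (le_max_left _ _) hpowpos.le
  have h2 : (p : ℝ) * Real.log y ≤ (p : ℝ) ^ σ * B := by
    rcases le_or_gt (Real.log y) 0 with hy0 | hy0
    · calc (p : ℝ) * Real.log y ≤ 0 := mul_nonpos_of_nonneg_of_nonpos hp0.le hy0
      _ ≤ (p : ℝ) ^ σ * B := mul_nonneg hpowpos.le (le_max_right _ _)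
    · calc (p : ℝ) * Real.log y ≤ (p : ℝ) ^ σ * Real.log y :=
        mul_le_mul_of_nonneg_right hpow hy0.le
      _ ≤ (p : ℝ) ^ σ * B := mul_le_mul_of_nonneg_left (le_max_left _ _) hpowpos.le
  have h3 : (p : ℝ) ^ σ * (A + B) ≤ (p : ℝ) ^ σ * (τ * Real.log p) :=
    mul_le_mul_of_nonneg_left hABlog hpowpos.le
  nlinarith [h1, h2, h3]

lemma key_ineq {σ : ℝ} (hσ : 1 < σ) {p : ℕ} (hp : 1 ≤ p) {x : ℝ} (hx : 0 < x) :
    (p : ℝ) * Real.log x ≤ x + (σ - 1)⁻¹ * (p : ℝ) ^ σ := by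
  have hp0 : (0 : ℝ) < p := by exact_mod_cast hp
  have hσ1 : (0 : ℝ) < σ - 1 := by linarith
  -- p * log x ≤ x + p * log p
  have h1 : Real.log (x / p) ≤ x / p - 1 := Real.log_le_sub_one_of_pos (by positivity)
  rw [Real.log_div hx.ne' hp0.ne'] at h1
  have h1' : (p : ℝ) * Real.log x ≤ x - p + p * Real.log p := by
    have := mul_le_mul_of_nonneg_left h1 hp0.le
    have hxp : (p : ℝ) * (x / p) = x := by field_simp
    nlinarith [this]
  -- p * log p ≤ (σ-1)⁻¹ * p^σ
  have h2 : (σ - 1) * Real.log p ≤ (p : ℝ) ^ (σ - 1) := by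
    rw [← Real.log_rpow hp0]
    have := Real.log_le_sub_one_of_pos (Real.rpow_pos_of_pos hp0 (σ - 1))
    linarith
  have hmul : (p : ℝ) * (p : ℝ) ^ (σ - 1) = (p : ℝ) ^ σ := by
    nth_rewrite 1 [← Real.rpow_one (p : ℝ)]
    rw [← Real.rpow_add hp0]
    norm_num
  have hfin : (p : ℝ) * Real.log p ≤ (σ - 1)⁻¹ * (p : ℝ) ^ σ := by
    rw [inv_mul_eq_div, le_div_iff₀ hσ1]
    nlinarith [mul_le_mul_of_nonneg_left h2 hp0.le, hmul]
  linarith [h1', hfin, hp0]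

/-- there exists `H > 0` such that
`T_{τ,σ,H}(l) ≤ T_{τ,σ,h}(1/k) + k·l` for all `k, l > 0`. -/
theorem stmt6 (τ σ h : ℝ) (hτ : 0 < τ) (hσ : 1 < σ) (hh : 0 < h) :
    ∃ H : ℝ, 0 < H ∧
      ∀ k l : ℝ, 0 < k → 0 < l →
        AssocT τ σ H l ≤ AssocT τ σ h (1 / k) + k * l := by
  refine ⟨h * Real.exp (-(σ - 1)⁻¹), by positivity, ?_⟩
  intro k l hk hl
  set H := h * Real.exp (-(σ - 1)⁻¹) with hHdef
  have hH : 0 < H := by positivity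
  have hk' : (0 : ℝ) < 1 / k := by positivity
  have hbdd := assoc_bdd τ σ h (1 / k) hτ hσ hh hk'
  have hσ0 : (0 : ℝ) < σ := by linarith
  simp only [AssocT]
  refine ciSup_le fun p => ?_
  rcases Nat.eq_zero_or_pos p with rfl | hp1
  · rw [term_zero hσ0]
    have h0 := le_ciSup hbdd 0
    rw [term_zero hσ0] at h0
    nlinarith [mul_pos hk hl]
  · have hterm := le_ciSup hbdd p
    rw [term_eq hh hk' hp1] at hterm
    rw [term_eq hH hl hp1]
    have hlogH : Real.log H = Real.log h - (σ - 1)⁻¹ := by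
      rw [hHdef, Real.log_mul hh.ne' (Real.exp_ne_zero _), Real.log_exp]
      ring
    have hlogk : Real.log (1 / k) = -Real.log k := by
      rw [one_div, Real.log_inv]
    rw [hlogk] at hterm
    rw [hlogH]
    have hkey := key_ineq hσ hp1 (mul_pos hk hl)
    rw [Real.log_mul hk.ne' hl.ne'] at hkey
    have hexp1 : (p : ℝ) ^ σ * (Real.log h - (σ - 1)⁻¹) =
        (p : ℝ) ^ σ * Real.log h - (σ - 1)⁻¹ * (p : ℝ) ^ σ := by ring
    have hexp2 : (p : ℝ) * (Real.log k + Real.log l) =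
        (p : ℝ) * Real.log k + (p : ℝ) * Real.log l := by ring
    linarith [hterm, hkey, hexp1, hexp2]
end
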